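/- arXiv:2403.10618 — 6 statements merged into one kernel-verified Lean document; each statement's English description precedes it below -/
import Mathlib

section
/- Let η_a and η_b be probability distributions on {0,...,k-1} (k ≥ 2). Then the minimum median width ε*(η_a, η_b) is at most (1/2)·(2k−3)/(2k−1). Equivalently, there exists an integer r ∈ {−(k−1),...,k−1} such that for all joint distributions η with marginals (η_a, η_b), P_η[X−Y < r] ≤ 1/2 + (1/2)(2k−3)/(2k−1) and P_η[X−Y ≤ r] ≥ 1/2 − (1/2)(2k−3)/(2k−1). -/
open Finset

def IsDist (k : ℕ) (p : Fin k → ℝ) : Prop :=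
  (∀ x, 0 ≤ p x) ∧ ∑ x, p x = 1

def IsJoint (k : ℕ) (η : Fin k → Fin k → ℝ) : Prop :=
  (∀ x y, 0 ≤ η x y) ∧ ∑ x, ∑ y, η x y = 1

def margA (k : ℕ) (η : Fin k → Fin k → ℝ) (x : Fin k) : ℝ := ∑ y, η x y

def margB (k : ℕ) (η : Fin k → Fin k → ℝ) (y : Fin k) : ℝ := ∑ x, η x y

noncomputable def qLow (k : ℕ) (r : ℝ) (η : Fin k → Fin k → ℝ) : ℝ :=
  ∑ x : Fin k, ∑ y : Fin k, if ((x : ℕ) : ℝ) - ((y : ℕ) : ℝ) < r then η x y else 0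

noncomputable def qUp (k : ℕ) (r : ℝ) (η : Fin k → Fin k → ℝ) : ℝ :=
  ∑ x : Fin k, ∑ y : Fin k, if ((x : ℕ) : ℝ) - ((y : ℕ) : ℝ) ≤ r then η x y else 0

noncomputable def ate (k : ℕ) (η : Fin k → Fin k → ℝ) : ℝ :=
  ∑ x : Fin k, ∑ y : Fin k, (((x : ℕ) : ℝ) - ((y : ℕ) : ℝ)) * η x y

noncomputable def nuL (k : ℕ) (r : ℝ) (ηa ηb : Fin k → ℝ) : ℝ :=
  sSup {v | ∃ η, IsJoint k η ∧ margA k η = ηa ∧ margB k η = ηb ∧ v = qLow k r η}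

noncomputable def nuU (k : ℕ) (r : ℝ) (ηa ηb : Fin k → ℝ) : ℝ :=
  sInf {v | ∃ η, IsJoint k η ∧ margA k η = ηa ∧ margB k η = ηb ∧ v = qUp k r η}

noncomputable def widthOf (k : ℕ) (r : ℝ) (ηa ηb : Fin k → ℝ) : ℝ :=
  max (max (nuL k r ηa ηb - 1/2) 0) (max (1/2 - nuU k r ηa ηb) 0)

noncomputable def epsStar (k : ℕ) (ηa ηb : Fin k → ℝ) : ℝ :=
  sInf {e | ∃ r : ℤ, -((k : ℤ) - 1) ≤ r ∧ r ≤ (k : ℤ) - 1 ∧ e = widthOf k (r : ℝ) ηa ηb}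

noncomputable def dTV (k : ℕ) (p q : Fin k → ℝ) : ℝ := (1/2) * ∑ x, |p x - q x|

noncomputable def dTV2 (k : ℕ) (η ρ : Fin k → Fin k → ℝ) : ℝ :=
  (1/2) * ∑ x, ∑ y, |η x y - ρ x y|

/-!
Write `A`, `B` for the distribution functions of `ηa`, `ηb` on `ℤ`. For every coupling,
`{X ≤ j} ⊆ {Y ≤ j - r - 1} ∪ {X - Y ≤ r}` and `{Y ≤ i} ⊆ {X ≤ i + r - 1} ∪ {X - Y ≥ r}` give
`P[X - Y ≤ r] ≥ A j - B (j - r - 1)` and `P[X - Y < r] ≤ 1 - (B i - A (i + r - 1))`, so it suffices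
to find `r` for which both gaps reach `c = 1 / (2k - 1)` at some `i`, `j`. Take the least `r` whose
first gap reaches `c`. If its second gap did not, then neither gap reaches `c` at shifts `r - 1`, `r`;
adding the two failures bounds every increment of `A` (and of `B`) by `2c`, and climbing from
`A (r - 1) < c` to `A (k - 1) = 1` in `k - r` steps gives `1 < (2 (k - r) + 1) c ≤ 1`.
-/

noncomputable def cdf {k : ℕ} (p : Fin k → ℝ) (j : ℤ) : ℝ :=
  ∑ x : Fin k, if ((x : ℕ) : ℤ) ≤ j then p x else 0

section Cdf

variable {k : ℕ}

lemma cdf_neg_one (p : Fin k → ℝ) : cdf p (-1) = 0 :=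
  sum_eq_zero fun _ _ => if_neg (by omega)

lemma cdf_natCast_sub_one {p : Fin k → ℝ} (hp : ∑ x, p x = 1) : cdf p ((k : ℤ) - 1) = 1 := by
  rw [← hp]
  exact sum_congr rfl fun x _ => if_pos (by omega)

lemma cdf_margA (η : Fin k → Fin k → ℝ) (j : ℤ) :
    cdf (margA k η) j = ∑ x : Fin k, ∑ y : Fin k, if ((x : ℕ) : ℤ) ≤ j then η x y else 0 := by
  simp only [cdf, margA, sum_ite_irrel, sum_const_zero]

lemma cdf_margB (η : Fin k → Fin k → ℝ) (j : ℤ) :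
    cdf (margB k η) j = ∑ x : Fin k, ∑ y : Fin k, if ((y : ℕ) : ℤ) ≤ j then η x y else 0 := by
  rw [sum_comm]
  simp only [cdf, margB, sum_ite_irrel, sum_const_zero]

lemma qLow_intCast (r : ℤ) (η : Fin k → Fin k → ℝ) :
    qLow k r η = ∑ x : Fin k, ∑ y : Fin k, if ((x : ℕ) : ℤ) - (y : ℕ) < r then η x y else 0 := by
  simp only [qLow]
  congr! 5
  norm_cast

lemma qUp_intCast (r : ℤ) (η : Fin k → Fin k → ℝ) :
    qUp k r η = ∑ x : Fin k, ∑ y : Fin k, if ((x : ℕ) : ℤ) - (y : ℕ) ≤ r then η x y else 0 := by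
  simp only [qUp]
  congr! 5
  norm_cast

lemma cdf_margA_sub_cdf_margB_le_qUp {η : Fin k → Fin k → ℝ} (hη : ∀ x y, 0 ≤ η x y) (r j : ℤ) :
    cdf (margA k η) j - cdf (margB k η) (j - r - 1) ≤ qUp k r η := by
  rw [sub_le_iff_le_add, cdf_margA, cdf_margB, qUp_intCast, ← sum_add_distrib]
  refine sum_le_sum fun x _ => ?_
  rw [← sum_add_distrib]
  refine sum_le_sum fun y _ => ?_
  split_ifs <;> linarith [hη x y]

lemma qLow_le_one_sub_cdf_margB_sub_cdf_margA {η : Fin k → Fin k → ℝ} (hη : IsJoint k η)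
    (r i : ℤ) :
    qLow k r η ≤ 1 - (cdf (margB k η) i - cdf (margA k η) (i + r - 1)) := by
  suffices qLow k r η + cdf (margB k η) i ≤ ∑ x, ∑ y, η x y + cdf (margA k η) (i + r - 1) by
    rw [hη.2] at this
    linarith
  rw [cdf_margA, cdf_margB, qLow_intCast, ← sum_add_distrib, ← sum_add_distrib]
  refine sum_le_sum fun x _ => ?_
  rw [← sum_add_distrib, ← sum_add_distrib]
  refine sum_le_sum fun y _ => ?_
  split_ifs <;> linarith [hη.1 x y]

end Cdf

section Gaps

variable (A B : ℤ → ℝ)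

lemma apply_lt_of_forall_sub_lt {c : ℝ} {r : ℤ} (hB : B (-1) = 0)
    (h₁ : ∀ j, A j - B (j - r) < c) (h₂ : ∀ i, B i - A (i + r - 1) < c) (n : ℕ) :
    A (r - 1 + n) < (2 * n + 1) * c := by
  induction n with
  | zero => simpa [hB] using h₁ (r - 1)
  | succ n ih =>
    have hA := h₁ (r + n)
    have hB' := h₂ n
    rw [add_sub_cancel_left] at hA
    rw [show (n : ℤ) + r - 1 = r - 1 + n by ring] at hB'
    rw [show r - 1 + ((n + 1 : ℕ) : ℤ) = r + n by push_cast; ring]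
    push_cast
    linarith

lemma false_of_forall_sub_lt {k : ℕ} (hA : A ((k : ℤ) - 1) = 1) (hB : B (-1) = 0) {r : ℤ}
    (hr₁ : 1 ≤ r) (hr₂ : r ≤ (k : ℤ) - 1)
    (h₁ : ∀ j, A j - B (j - r) < (2 * (k : ℝ) - 1)⁻¹)
    (h₂ : ∀ i, B i - A (i + r - 1) < (2 * (k : ℝ) - 1)⁻¹) : False := by
  obtain ⟨n, hn⟩ : ∃ n : ℕ, (n : ℤ) = k - r := ⟨(k - r).toNat, Int.toNat_of_nonneg (by omega)⟩
  have h := apply_lt_of_forall_sub_lt A B hB h₁ h₂ n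
  rw [show r - 1 + n = k - 1 by omega, hA] at h
  have hn' : (n : ℝ) ≤ k - 1 := by exact_mod_cast (show (n : ℤ) ≤ k - 1 by omega)
  have hk : (1 : ℝ) ≤ k - 1 := by exact_mod_cast (show (1 : ℤ) ≤ k - 1 by omega)
  have : (2 * n + 1) * (2 * (k : ℝ) - 1)⁻¹ ≤ 1 := by
    rw [← div_eq_mul_inv, div_le_one (by linarith)]
    linarith
  linarith

lemma exists_shift_inv_le_sub_and_inv_le_sub {k : ℕ} (hA₀ : A (-1) = 0) (hA₁ : A ((k : ℤ) - 1) = 1)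
    (hB₀ : B (-1) = 0) (hB₁ : B ((k : ℤ) - 1) = 1) :
    ∃ r : ℤ, -((k : ℤ) - 1) ≤ r ∧ r ≤ (k : ℤ) - 1 ∧
      (∃ j, (2 * (k : ℝ) - 1)⁻¹ ≤ A j - B (j - r - 1)) ∧
      (∃ i, (2 * (k : ℝ) - 1)⁻¹ ≤ B i - A (i + r - 1)) := by
  set c := (2 * (k : ℝ) - 1)⁻¹
  have hk : 1 ≤ k := by
    by_contra h
    obtain rfl : k = 0 := by omega
    norm_num [hA₀] at hA₁
  have hc : c ≤ 1 := inv_le_one_of_one_le₀ <| by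
    have : (1 : ℝ) ≤ k := by exact_mod_cast hk
    linarith
  let P z := -((k : ℤ) - 1) ≤ z ∧ ∃ j, c ≤ A j - B (j - z - 1)
  have hP : P (k - 1) := ⟨by omega, k - 1, by simpa [hA₁, hB₀] using hc⟩
  obtain ⟨r, ⟨hr₁, hU⟩, hmin⟩ := Int.exists_least_of_bdd ⟨-((k : ℤ) - 1), fun z hz => hz.1⟩ ⟨_, hP⟩
  refine ⟨r, hr₁, hmin _ hP, hU, ?_⟩
  rcases hr₁.eq_or_lt with rfl | hr₁
  · exact ⟨k - 1, by simpa [hA₀, hB₁] using hc⟩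
  by_contra! h₂
  have h₁ : ∀ j, A j - B (j - r) < c := fun j => by
    by_contra! h
    have := hmin (r - 1) ⟨by omega, j, by rwa [show j - (r - 1) - 1 = j - r by ring]⟩
    omega
  rcases le_or_gt 1 r with hr | hr
  · exact false_of_forall_sub_lt A B hA₁ hB₀ hr (hmin _ hP) h₁ h₂
  · exact false_of_forall_sub_lt B A hB₁ hA₀ (r := 1 - r) (by omega) (by omega)
      (fun j => by rw [show j - (1 - r) = j + r - 1 by ring]; exact h₂ j)
      (fun i => by rw [show i + (1 - r) - 1 = i - r by ring]; exact h₁ i)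

end Gaps

theorem stmt4_general (k : ℕ) (ηa ηb : Fin k → ℝ) (ha : IsDist k ηa) (hb : IsDist k ηb) :
    ∃ r : ℤ, -((k : ℤ) - 1) ≤ r ∧ r ≤ (k : ℤ) - 1 ∧
      ∀ η, IsJoint k η → margA k η = ηa → margB k η = ηb →
        qLow k (r : ℝ) η ≤ 1/2 + (1/2) * (2*(k:ℝ)-3)/(2*(k:ℝ)-1) ∧
        1/2 - (1/2) * (2*(k:ℝ)-3)/(2*(k:ℝ)-1) ≤ qUp k (r : ℝ) η := by
  obtain ⟨r, hr₁, hr₂, ⟨j, hj⟩, ⟨i, hi⟩⟩ := exists_shift_inv_le_sub_and_inv_le_sub (cdf ηa) (cdf ηb)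
    (cdf_neg_one ηa) (cdf_natCast_sub_one ha.2) (cdf_neg_one ηb) (cdf_natCast_sub_one hb.2)
  refine ⟨r, hr₁, hr₂, fun η hη hηa hηb => ?_⟩
  have hUp := cdf_margA_sub_cdf_margB_le_qUp hη.1 r j
  have hLow := qLow_le_one_sub_cdf_margB_sub_cdf_margA hη r i
  rw [hηa, hηb] at hUp hLow
  have hden : 2 * (k : ℝ) - 1 ≠ 0 := sub_ne_zero.2 (by norm_cast; omega)
  have hbound : 1/2 + (1/2) * (2*(k:ℝ)-3)/(2*(k:ℝ)-1) = 1 - (2 * (k : ℝ) - 1)⁻¹ := by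
    field_simp
    ring
  constructor <;> linarith

theorem stmt4 (k : ℕ) (hk : 2 ≤ k) (ηa ηb : Fin k → ℝ) (ha : IsDist k ηa) (hb : IsDist k ηb) :
    ∃ r : ℤ, -((k : ℤ) - 1) ≤ r ∧ r ≤ (k : ℤ) - 1 ∧
      ∀ η, IsJoint k η → margA k η = ηa → margB k η = ηb →
        qLow k (r : ℝ) η ≤ 1/2 + (1/2) * (2*(k:ℝ)-3)/(2*(k:ℝ)-1) ∧
        1/2 - (1/2) * (2*(k:ℝ)-3)/(2*(k:ℝ)-1) ≤ qUp k (r : ℝ) η :=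
  stmt4_general k ηa ηb ha hb
end

section
/- Fix k ≥ 2 and let ψ = 1/(2k−1). There is no integer r ∈ {−(k−1),...,k−1} together with joint distributions η, η′ on {0,...,k−1}² having the same marginals such that P_η[X−Y ≤ r−1] < ψ and P_{η′}[X−Y < r] > 1 − ψ. (This is the key contradiction step in the upper bound for the minimum median width.) -/
/-!
The mean `E[X - Y]` is determined by the marginals, so `η` and `η'` have the same mean.
Since `X - Y` is an integer in `[-(k-1), k-1]`, a small `P_η[X - Y ≤ r - 1]` forces the mean of `η`
above `r - (r + k - 1) ψ`, while a large `P_η'[X - Y < r]` forces the mean of `η'` below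
`r - 1 + (k - r) ψ`. These two bounds are compatible only if `(2k - 1) ψ > 1`, but `(2k - 1) ψ = 1`.
-/

open Finset

section Bounds

variable {ι : Type*} [Fintype ι] {w f : ι → ℝ} (p : ι → Prop) [DecidablePred p] {a b : ℝ}

theorem le_sum_mul_of_le_of_le (hw : ∀ i, 0 ≤ w i) (hw1 : ∑ i, w i = 1)
    (ha : ∀ i, p i → a ≤ f i) (hb : ∀ i, ¬p i → b ≤ f i) :
    b + (a - b) * ∑ i, (if p i then w i else 0) ≤ ∑ i, f i * w i := by
  have hpoint : ∀ i ∈ (univ : Finset ι),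
      b * w i + (a - b) * (if p i then w i else 0) ≤ f i * w i := by
    intro i _
    by_cases hi : p i
    · simp only [if_pos hi]
      nlinarith [ha i hi, hw i]
    · simp only [if_neg hi, mul_zero, add_zero]
      exact mul_le_mul_of_nonneg_right (hb i hi) (hw i)
  calc b + (a - b) * ∑ i, (if p i then w i else 0)
      = ∑ i, (b * w i + (a - b) * (if p i then w i else 0)) := by
        rw [sum_add_distrib, ← mul_sum, ← mul_sum, hw1, mul_one]
    _ ≤ ∑ i, f i * w i := sum_le_sum hpoint

theorem sum_mul_le_of_le_of_le (hw : ∀ i, 0 ≤ w i) (hw1 : ∑ i, w i = 1)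
    (ha : ∀ i, p i → f i ≤ a) (hb : ∀ i, ¬p i → f i ≤ b) :
    ∑ i, f i * w i ≤ b + (a - b) * ∑ i, (if p i then w i else 0) := by
  have := le_sum_mul_of_le_of_le (f := fun i => -f i) (a := -a) (b := -b) p hw hw1
    (fun i hi => neg_le_neg (ha i hi)) (fun i hi => neg_le_neg (hb i hi))
  simp only [neg_mul, sum_neg_distrib] at this
  linarith

end Bounds

theorem Fin.cast_val_le_sub_one {k : ℕ} (x : Fin k) : ((x : ℕ) : ℝ) ≤ k - 1 := by
  have : ((x : ℕ) : ℝ) + 1 ≤ k := by exact_mod_cast x.isLt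
  linarith

theorem ate_eq_sum_margA_sub_sum_margB (k : ℕ) (η : Fin k → Fin k → ℝ) :
    ate k η = ∑ x : Fin k, ((x : ℕ) : ℝ) * margA k η x - ∑ y : Fin k, ((y : ℕ) : ℝ) * margB k η y := by
  simp only [ate, margA, margB, sub_mul, sum_sub_distrib, mul_sum]
  rw [sum_comm (f := fun (x y : Fin k) => ((y : ℕ) : ℝ) * η x y)]

theorem ate_eq_of_marg_eq {k : ℕ} {η η' : Fin k → Fin k → ℝ}
    (hA : margA k η = margA k η') (hB : margB k η = margB k η') : ate k η = ate k η' := by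
  rw [ate_eq_sum_margA_sub_sum_margB, ate_eq_sum_margA_sub_sum_margB, hA, hB]

namespace IsJoint

variable {k : ℕ} {η : Fin k → Fin k → ℝ}

theorem sum_prod_eq_one (hη : IsJoint k η) : ∑ z : Fin k × Fin k, η z.1 z.2 = 1 := by
  rw [Fintype.sum_prod_type']
  exact hη.2

theorem sub_mul_qUp_le_ate (hη : IsJoint k η) (r : ℤ) :
    (r : ℝ) - (r + k - 1) * qUp k ((r : ℝ) - 1) η ≤ ate k η := by
  have := le_sum_mul_of_le_of_le (w := fun z : Fin k × Fin k => η z.1 z.2)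
    (f := fun z => ((z.1 : ℕ) : ℝ) - ((z.2 : ℕ) : ℝ)) (a := -((k : ℝ) - 1)) (b := r)
    (fun z => ((z.1 : ℕ) : ℝ) - ((z.2 : ℕ) : ℝ) ≤ (r : ℝ) - 1) (fun z => hη.1 z.1 z.2)
    hη.sum_prod_eq_one
    (fun z _ => by linarith [Fin.cast_val_le_sub_one z.2, (z.1 : ℕ).cast_nonneg (α := ℝ)])
    (fun z hz => by
      have : r - 1 < ((z.1 : ℕ) : ℤ) - ((z.2 : ℕ) : ℤ) := by exact_mod_cast not_le.mp hz
      exact_mod_cast (by omega : r ≤ ((z.1 : ℕ) : ℤ) - ((z.2 : ℕ) : ℤ)))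
  simp only [Fintype.sum_prod_type] at this
  simp only [qUp, ate]
  linarith

theorem ate_le_sub_mul_qLow (hη : IsJoint k η) (r : ℤ) :
    ate k η ≤ (k - 1) - (k - r) * qLow k (r : ℝ) η := by
  have := sum_mul_le_of_le_of_le (w := fun z : Fin k × Fin k => η z.1 z.2)
    (f := fun z => ((z.1 : ℕ) : ℝ) - ((z.2 : ℕ) : ℝ)) (a := (r : ℝ) - 1) (b := (k : ℝ) - 1)
    (fun z => ((z.1 : ℕ) : ℝ) - ((z.2 : ℕ) : ℝ) < r) (fun z => hη.1 z.1 z.2)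
    hη.sum_prod_eq_one
    (fun z hz => by
      have : ((z.1 : ℕ) : ℤ) - ((z.2 : ℕ) : ℤ) < r := by exact_mod_cast hz
      exact_mod_cast (by omega : ((z.1 : ℕ) : ℤ) - ((z.2 : ℕ) : ℤ) ≤ r - 1))
    (fun z _ => by linarith [Fin.cast_val_le_sub_one z.1, (z.2 : ℕ).cast_nonneg (α := ℝ)])
  simp only [Fintype.sum_prod_type] at this
  simp only [qLow, ate]
  linarith

end IsJoint

theorem stmt5_general (k : ℕ) :
    ¬ ∃ (r : ℤ) (η η' : Fin k → Fin k → ℝ),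
      -((k : ℤ) - 1) ≤ r ∧ r ≤ (k : ℤ) - 1 ∧
      IsJoint k η ∧ IsJoint k η' ∧
      margA k η = margA k η' ∧ margB k η = margB k η' ∧
      qUp k ((r : ℝ) - 1) η < 1/(2*(k:ℝ)-1) ∧
      qLow k (r : ℝ) η' > 1 - 1/(2*(k:ℝ)-1) := by
  rintro ⟨r, η, η', hr1, hr2, hη, hη', hA, hB, hU, hL⟩
  set ψ : ℝ := 1 / (2 * (k : ℝ) - 1)
  have hr1' : -((k : ℝ) - 1) ≤ r := by exact_mod_cast hr1
  have hr2' : (r : ℝ) ≤ k - 1 := by exact_mod_cast hr2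
  have hψ : (2 * (k : ℝ) - 1) * ψ = 1 := mul_one_div_cancel (by linarith)
  have hlow := hη.sub_mul_qUp_le_ate r
  have hup := hη'.ate_le_sub_mul_qLow r
  have hq := mul_le_mul_of_nonneg_left hU.le (by linarith : (0 : ℝ) ≤ r + k - 1)
  have hp := mul_lt_mul_of_pos_left hL (by linarith : (0 : ℝ) < k - r)
  linarith [ate_eq_of_marg_eq hA hB]

theorem stmt5 (k : ℕ) (hk : 2 ≤ k) :
    ¬ ∃ (r : ℤ) (η η' : Fin k → Fin k → ℝ),
      -((k : ℤ) - 1) ≤ r ∧ r ≤ (k : ℤ) - 1 ∧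
      IsJoint k η ∧ IsJoint k η' ∧
      margA k η = margA k η' ∧ margB k η = margB k η' ∧
      qUp k ((r : ℝ) - 1) η < 1/(2*(k:ℝ)-1) ∧
      qLow k (r : ℝ) η' > 1 - 1/(2*(k:ℝ)-1) :=
  stmt5_general k
end

section
/- For k ≥ 2, define distributions on {0,...,k−1}: η_a(x) = (1 + 1{x>0})/(2k−1) and η_b(y) = (1 + 1{y<k−1})/(2k−1). Then there exists a joint distribution η with marginals η_a, η_b such that P_η[X−Y ≤ 0] = 1/(2k−1). (Witness: Y = (X−1) mod k with X ∼ η_a.) -/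
open Finset

theorem stmt8 (k : ℕ) (hk : 2 ≤ k) :
    ∃ η : Fin k → Fin k → ℝ, IsJoint k η ∧
      (∀ x, margA k η x = (1 + if 0 < (x : ℕ) then (1:ℝ) else 0) / (2*(k:ℝ)-1)) ∧
      (∀ y, margB k η y = (1 + if (y : ℕ) < k - 1 then (1:ℝ) else 0) / (2*(k:ℝ)-1)) ∧
      qUp k 0 η = 1/(2*(k:ℝ)-1) := by
  haveI : NeZero k := ⟨by omega⟩
  have hkR : (2:ℝ) ≤ (k:ℝ) := by exact_mod_cast hk
  set c : ℝ := 2*(k:ℝ)-1 with hc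
  have hcpos : 0 < c := by simp only [hc]; linarith
  have hc0 : c ≠ 0 := ne_of_gt hcpos
  set pa : Fin k → ℝ := fun x => (1 + if 0 < (x:ℕ) then (1:ℝ) else 0)/c with hpa
  have hpann : ∀ x, 0 ≤ pa x := by
    intro x
    simp only [hpa]
    have : (0:ℝ) ≤ (if 0 < (x:ℕ) then (1:ℝ) else 0) := by positivity
    positivity
  have hone : ((1 : Fin k) : ℕ) = 1 := by
    rw [Fin.val_one']
    exact Nat.mod_eq_of_lt (by omega)
  have hval : ∀ x : Fin k, ((x - 1 : Fin k) : ℕ) = if (x:ℕ) = 0 then k-1 else (x:ℕ) - 1 := by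
    intro x
    simp only [Fin.sub_def, hone]
    show (k - 1 + (x:ℕ)) % k = _
    have := x.isLt
    rcases Nat.eq_zero_or_pos (x:ℕ) with h | h
    · rw [h, Nat.add_zero, if_pos rfl]
      exact Nat.mod_eq_of_lt (by omega)
    · rw [if_neg (by omega)]
      have h2 : k - 1 + (x:ℕ) = k + ((x:ℕ) - 1) := by omega
      rw [h2, Nat.add_mod_left]
      exact Nat.mod_eq_of_lt (by omega)
  refine ⟨fun x y => if y = x - 1 then pa x else 0, ⟨?_, ?_⟩, ?_, ?_, ?_⟩
  · intro x y; dsimp only; split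
    · exact hpann x
    · exact le_refl 0
  · simp only [Finset.sum_ite_eq' Finset.univ, Finset.mem_univ, if_true]
    have h1 : ∑ x : Fin k, pa x = (∑ x : Fin k, (1 + if 0 < (x:ℕ) then (1:ℝ) else 0))/c := by
      rw [Finset.sum_div]
    rw [h1, Finset.sum_add_distrib, Finset.sum_ite, Finset.sum_const, Finset.sum_const,
      Finset.sum_const]
    have hcard : (Finset.univ.filter (fun x : Fin k => 0 < (x:ℕ))).card = k - 1 := by
      have heq : (Finset.univ.filter (fun x : Fin k => 0 < (x:ℕ))) = Finset.univ \ {0} := by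
        ext x
        simp [Fin.pos_iff_ne_zero]
      rw [heq, Finset.card_sdiff_of_subset (by simp)]
      simp [Finset.card_univ]
    rw [hcard]
    simp only [Finset.card_univ, Fintype.card_fin, nsmul_eq_mul, mul_one, mul_zero, add_zero]
    rw [Nat.cast_sub (by omega : 1 ≤ k)]
    field_simp [hc]
    ring
  · intro x
    simp [margA, Finset.sum_ite_eq' Finset.univ, hpa]
  · intro y
    have hiff : ∀ x : Fin k, (y = x - 1) ↔ (x = y + 1) := by
      intro x
      constructor <;> intro h <;> subst h <;> simp
    simp only [margB, hiff]
    rw [Finset.sum_ite_eq' Finset.univ]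
    simp only [Finset.mem_univ, if_true, hpa]
    congr 2
    have hv : ((y + 1 : Fin k) : ℕ) = ((y:ℕ) + 1) % k := by
      rw [Fin.add_def, hone]
    have hy := y.isLt
    by_cases h : (y:ℕ) < k - 1
    · have h2 : ((y+1 : Fin k) : ℕ) = (y:ℕ) + 1 := by
        rw [hv]; exact Nat.mod_eq_of_lt (by omega)
      simp [h2, h]
    · have hyk : (y:ℕ) = k - 1 := by omega
      have h2 : ((y+1 : Fin k) : ℕ) = 0 := by
        rw [hv, hyk]
        have hkk : k - 1 + 1 = k := by omega
        rw [hkk, Nat.mod_self]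
      simp [h2, h]
  · unfold qUp
    have step : ∀ x : Fin k, (∑ y : Fin k,
        if ((x : ℕ) : ℝ) - ((y : ℕ) : ℝ) ≤ 0 then (if y = x - 1 then pa x else 0) else 0)
        = if ((x : ℕ) : ℝ) - (((x - 1 : Fin k) : ℕ) : ℝ) ≤ 0 then pa x else 0 := by
      intro x
      have h3 : ∀ y : Fin k,
          (if ((x : ℕ) : ℝ) - ((y : ℕ) : ℝ) ≤ 0 then (if y = x - 1 then pa x else 0) else 0)
          = if y = x - 1 then (if ((x : ℕ) : ℝ) - (((x - 1 : Fin k) : ℕ) : ℝ) ≤ 0 then pa x else 0) else 0 := by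
        intro y
        by_cases hy : y = x - 1 <;> simp [hy]
      simp only [h3, Finset.sum_ite_eq' Finset.univ, Finset.mem_univ, if_true]
    simp only [step]
    rw [Finset.sum_eq_single_of_mem 0 (Finset.mem_univ 0)]
    · have h0 : (((0 : Fin k) : ℕ) : ℝ) = 0 := by simp
      have h1 : (((0 : Fin k) - 1 : Fin k) : ℕ) = k - 1 := by
        rw [hval, if_pos (by simp)]
      rw [h0, h1]
      have hle : (0:ℝ) - ((k - 1 : ℕ) : ℝ) ≤ 0 := by
        have : (0:ℝ) ≤ ((k - 1 : ℕ) : ℝ) := Nat.cast_nonneg _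
        linarith
      rw [if_pos hle]
      simp [hpa]
    · intro x _ hx
      have hx0 : 0 < (x:ℕ) := by
        rcases Nat.eq_zero_or_pos (x:ℕ) with h | h
        · exact absurd (Fin.ext h) hx
        · exact h
      have h1 : (((x : Fin k) - 1 : Fin k) : ℕ) = (x:ℕ) - 1 := by
        rw [hval, if_neg (by omega)]
      rw [h1, if_neg]
      rw [Nat.cast_sub (by omega : 1 ≤ (x:ℕ))]
      push_cast
      intro habs
      linarith [habs]
end

section
/- For k ≥ 2, define distributions on {0,...,k−1}: η_a(x) = (1 + 1{x>0})/(2k−1) and η_b(y) = (1 + 1{y<k−1})/(2k−1). Then there exists a joint distribution η with marginals η_a, η_b such that P_η[X−Y < 1] = (2k−2)/(2k−1). (Witness: set Y=X when X ≠ k−1, and when X = k−1 set Y = 0 or k−1 each with probability 1/2.) -/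
open Finset

theorem stmt9 (k : ℕ) (hk : 2 ≤ k) :
    ∃ η : Fin k → Fin k → ℝ, IsJoint k η ∧
      (∀ x, margA k η x = (1 + if 0 < (x : ℕ) then (1:ℝ) else 0) / (2*(k:ℝ)-1)) ∧
      (∀ y, margB k η y = (1 + if (y : ℕ) < k - 1 then (1:ℝ) else 0) / (2*(k:ℝ)-1)) ∧
      qLow k 1 η = (2*(k:ℝ)-2)/(2*(k:ℝ)-1) := by
  
  have hk' : (2:ℝ) ≤ (k:ℝ) := by exact_mod_cast hk
  have hc0 : (0:ℝ) < 2*(k:ℝ)-1 := by linarith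
  set last : Fin k := ⟨k-1, by omega⟩ with hlast
  set z : Fin k := ⟨0, by omega⟩ with hz
  set η : Fin k → Fin k → ℝ := fun x y =>
    ((if y = x ∧ (x:ℕ) < k-1 then (1 + if 0 < (x:ℕ) then (1:ℝ) else 0) else 0)
      + (if x = last ∧ (y = z ∨ y = x) then (1:ℝ) else 0)) / (2*(k:ℝ)-1) with hη
  have hzlast : z ≠ last := by
    simp only [hz, hlast, Ne, Fin.mk.injEq]; omega
  have hA : ∀ x, margA k η x = (1 + if 0 < (x : ℕ) then (1:ℝ) else 0) / (2*(k:ℝ)-1) := by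
    intro x
    unfold margA
    simp only [hη]
    rw [← Finset.sum_div]
    congr 1
    rw [Finset.sum_add_distrib]
    by_cases hx : (x:ℕ) < k - 1
    · have hxlast : x ≠ last := by
        simp only [hlast, Ne, Fin.ext_iff]; omega
      rw [show (∑ y : Fin k, if y = x ∧ (x:ℕ) < k-1 then (1 + if 0 < (x:ℕ) then (1:ℝ) else 0) else 0)
          = ∑ y : Fin k, if y = x then (1 + if 0 < (x:ℕ) then (1:ℝ) else 0) else 0 by
        apply Finset.sum_congr rfl; intro y _; simp [hx]]
      rw [Finset.sum_ite_eq' Finset.univ x]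
      simp [hxlast]
    · have hxlast : x = last := by
        simp only [hlast, Fin.ext_iff]; omega
      have hxv : (x:ℕ) = k - 1 := by simp [hxlast, hlast]
      have h0x : 0 < (x:ℕ) := by omega
      rw [show (∑ y : Fin k, if y = x ∧ (x:ℕ) < k-1 then (1 + if 0 < (x:ℕ) then (1:ℝ) else 0) else 0) = 0 by
        apply Finset.sum_eq_zero; intro y _; simp [hx]]
      rw [show (∑ y : Fin k, if x = last ∧ (y = z ∨ y = x) then (1:ℝ) else 0)
          = ∑ y : Fin k, if y = z ∨ y = x then (1:ℝ) else 0 by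
        apply Finset.sum_congr rfl; intro y _; simp [hxlast]]
      rw [show (∑ y : Fin k, if y = z ∨ y = x then (1:ℝ) else 0)
          = ∑ y : Fin k, ((if y = z then (1:ℝ) else 0) + if y = x then (1:ℝ) else 0) by
        apply Finset.sum_congr rfl; intro y _
        by_cases h1 : y = z <;> by_cases h2 : y = x <;> simp_all [hxlast, hzlast]]
      rw [Finset.sum_add_distrib, Finset.sum_ite_eq' Finset.univ z, Finset.sum_ite_eq' Finset.univ x]
      simp [h0x]
  have hB : ∀ y, margB k η y = (1 + if (y : ℕ) < k - 1 then (1:ℝ) else 0) / (2*(k:ℝ)-1) := by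
    intro y
    unfold margB
    simp only [hη]
    rw [← Finset.sum_div]
    congr 1
    rw [Finset.sum_add_distrib]
    have e1 : (∑ x : Fin k, if y = x ∧ (x:ℕ) < k-1 then (1 + if 0 < (x:ℕ) then (1:ℝ) else 0) else 0)
        = if (y:ℕ) < k-1 then (1 + if 0 < (y:ℕ) then (1:ℝ) else 0) else 0 := by
      rw [show (∑ x : Fin k, if y = x ∧ (x:ℕ) < k-1 then (1 + if 0 < (x:ℕ) then (1:ℝ) else 0) else 0)
          = ∑ x : Fin k, if x = y then (if (x:ℕ) < k-1 then (1 + if 0 < (x:ℕ) then (1:ℝ) else 0) else 0) else 0 by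
        apply Finset.sum_congr rfl; intro x _
        by_cases h : y = x
        · simp [h, ite_and]
        · simp [h, Ne.symm h, ite_and]]
      rw [Finset.sum_ite_eq' Finset.univ y]
      simp
    have e2 : (∑ x : Fin k, if x = last ∧ (y = z ∨ y = x) then (1:ℝ) else 0)
        = if y = z ∨ y = last then (1:ℝ) else 0 := by
      rw [show (∑ x : Fin k, if x = last ∧ (y = z ∨ y = x) then (1:ℝ) else 0)
          = ∑ x : Fin k, if x = last then (if y = z ∨ y = last then (1:ℝ) else 0) else 0 by
        apply Finset.sum_congr rfl; intro x _
        by_cases h : x = last <;> simp [h]]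
      rw [Finset.sum_ite_eq' Finset.univ last]
      simp
    rw [e1, e2]
    have hyk : (y:ℕ) < k := y.isLt
    by_cases h1 : (y:ℕ) < k - 1
    · have hylast : y ≠ last := by simp only [hlast, Ne, Fin.ext_iff]; omega
      by_cases h0 : 0 < (y:ℕ)
      · have hyz : y ≠ z := by simp only [hz, Ne, Fin.ext_iff]; omega
        simp [h1, h0, hyz, hylast]
      · have hyz : y = z := by simp only [hz, Fin.ext_iff]; omega
        subst hyz
        simp [h1, h0]
    · have hylast : y = last := by simp only [hlast, Fin.ext_iff]; omega
      have h0 : ¬ (y = z) := by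
        intro h; exact hzlast (hylast ▸ h).symm
      simp [h1, hylast, h0]
      simp [show ((last:Fin k):ℕ) = k-1 from rfl]
  refine ⟨η, ⟨?_, ?_⟩, hA, hB, ?_⟩
  · intro x y
    simp only [hη]
    apply div_nonneg _ (le_of_lt hc0)
    have h1 : (0:ℝ) ≤ if x = last ∧ (y = z ∨ y = x) then (1:ℝ) else 0 := by
      split <;> norm_num
    have h2 : (0:ℝ) ≤ if y = x ∧ (x:ℕ) < k-1 then (1 + if 0 < (x:ℕ) then (1:ℝ) else 0) else 0 := by
      split
      · split <;> norm_num
      · norm_num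
    linarith
  · have : ∑ x, ∑ y, η x y = ∑ x, margA k η x := by rfl
    rw [this]
    rw [show (∑ x, margA k η x) = ∑ x : Fin k, (1 + if 0 < (x:ℕ) then (1:ℝ) else 0) / (2*(k:ℝ)-1) by
      apply Finset.sum_congr rfl; intro x _; exact hA x]
    rw [← Finset.sum_div, Finset.sum_add_distrib]
    rw [show (∑ x : Fin k, if 0 < (x:ℕ) then (1:ℝ) else 0)
        = ∑ x : Fin k, (1 - if x = z then (1:ℝ) else 0) by
      apply Finset.sum_congr rfl; intro x _
      by_cases h : x = z
      · simp [h, hz]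
      · have : 0 < (x:ℕ) := by
          rcases Nat.eq_zero_or_pos (x:ℕ) with h0 | h0
          · exact absurd (by simp only [hz, Fin.ext_iff]; omega : x = z) h
          · exact h0
        simp [h, this]]
    rw [Finset.sum_sub_distrib, Finset.sum_ite_eq' Finset.univ z]
    simp only [Finset.sum_const, Finset.card_univ, Fintype.card_fin, nsmul_eq_mul, mul_one,
      Finset.mem_univ, if_true]
    rw [div_eq_iff hc0.ne']
    ring
  · unfold qLow
    simp only [hη]
    have key : ∀ x y : Fin k,
        (if ((x : ℕ) : ℝ) - ((y : ℕ) : ℝ) < 1 then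
          ((if y = x ∧ (x:ℕ) < k-1 then (1 + if 0 < (x:ℕ) then (1:ℝ) else 0) else 0)
            + (if x = last ∧ (y = z ∨ y = x) then (1:ℝ) else 0)) / (2*(k:ℝ)-1) else 0)
        = ((if y = x ∧ (x:ℕ) < k-1 then (1 + if 0 < (x:ℕ) then (1:ℝ) else 0) else 0)
            + (if x = last ∧ y = last then (1:ℝ) else 0)) / (2*(k:ℝ)-1) := by
      intro x y
      by_cases hlt : ((x : ℕ) : ℝ) - ((y : ℕ) : ℝ) < 1
      · rw [if_pos hlt]
        congr 2
        by_cases hx : x = last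
        · subst hx
          have hxv : ((last:Fin k):ℕ) = k - 1 := rfl
          by_cases hy : y = last
          · simp [hy]
          · have hyz : ¬ (y = z) := by
              intro h; subst h
              have : ((k:ℝ) - 1) - 0 < 1 := by
                have : ((z:Fin k):ℕ) = 0 := rfl
                push_cast [hxv, this] at hlt
                rw [Nat.cast_sub (by omega)] at hlt
                push_cast at hlt
                linarith
              linarith
            simp [hy, hyz]
        · simp [hx]
      · rw [if_neg hlt]
        have hnxy : ¬ (y = x) := by
          intro h; subst h; simp at hlt
        have hxy : (y:ℕ) < (x:ℕ) := by
          by_contra hc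
          push_neg at hc hlt
          have : ((x:ℕ):ℝ) ≤ ((y:ℕ):ℝ) := by exact_mod_cast hc
          linarith
        have hnyl : ¬ (y = last) := by
          intro h; subst h
          have := x.isLt
          simp only [hlast] at hxy
          omega
        symm
        rw [div_eq_zero_iff]
        left
        simp [hnxy, hnyl]
    simp only [key]
    rw [show (∑ x : Fin k, ∑ y : Fin k,
        ((if y = x ∧ (x:ℕ) < k-1 then (1 + if 0 < (x:ℕ) then (1:ℝ) else 0) else 0)
          + (if x = last ∧ y = last then (1:ℝ) else 0)) / (2*(k:ℝ)-1))
        = (∑ x : Fin k, ∑ y : Fin k,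
        ((if y = x ∧ (x:ℕ) < k-1 then (1 + if 0 < (x:ℕ) then (1:ℝ) else 0) else 0)
          + (if x = last ∧ y = last then (1:ℝ) else 0))) / (2*(k:ℝ)-1) by
      rw [Finset.sum_div]; apply Finset.sum_congr rfl; intro x _; rw [Finset.sum_div]]
    congr 1
    have inner : ∀ x : Fin k, (∑ y : Fin k,
        ((if y = x ∧ (x:ℕ) < k-1 then (1 + if 0 < (x:ℕ) then (1:ℝ) else 0) else 0)
          + (if x = last ∧ y = last then (1:ℝ) else 0)))
        = (if (x:ℕ) < k-1 then (1 + if 0 < (x:ℕ) then (1:ℝ) else 0) else 0)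
          + (if x = last then (1:ℝ) else 0) := by
      intro x
      rw [Finset.sum_add_distrib]
      congr 1
      · rw [show (∑ y : Fin k, if y = x ∧ (x:ℕ) < k-1 then (1 + if 0 < (x:ℕ) then (1:ℝ) else 0) else 0)
            = ∑ y : Fin k, if y = x then (if (x:ℕ) < k-1 then (1 + if 0 < (x:ℕ) then (1:ℝ) else 0) else 0) else 0 by
          apply Finset.sum_congr rfl; intro y _
          by_cases h : y = x <;> simp [h, ite_and]]
        rw [Finset.sum_ite_eq' Finset.univ x]
        simp
      · rw [show (∑ y : Fin k, if x = last ∧ y = last then (1:ℝ) else 0)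
            = ∑ y : Fin k, if y = last then (if x = last then (1:ℝ) else 0) else 0 by
          apply Finset.sum_congr rfl; intro y _
          by_cases h : y = last <;> simp [h, and_comm]]
        rw [Finset.sum_ite_eq' Finset.univ last]
        simp
    simp only [inner]
    rw [Finset.sum_add_distrib, Finset.sum_ite_eq' Finset.univ last]
    rw [show (∑ x : Fin k, if (x:ℕ) < k-1 then (1 + if 0 < (x:ℕ) then (1:ℝ) else 0) else 0)
        = ∑ x : Fin k, ((1 + if 0 < (x:ℕ) then (1:ℝ) else 0) - if x = last then 2 else 0) by
      apply Finset.sum_congr rfl; intro x _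
      by_cases h : (x:ℕ) < k-1
      · have hxl : x ≠ last := by simp only [hlast, Ne, Fin.ext_iff]; omega
        simp [h, hxl]
      · have hxl : x = last := by simp only [hlast, Fin.ext_iff]; have := x.isLt; omega
        have h0 : 0 < (x:ℕ) := by simp only [hlast, Fin.ext_iff] at hxl; omega
        simp [h, hxl, h0, show (1:ℕ) < k from by omega, show ((last:Fin k):ℕ) = k-1 from rfl,
          show 0 < k-1 from by omega]
        norm_num]
    rw [Finset.sum_sub_distrib, Finset.sum_add_distrib, Finset.sum_ite_eq' Finset.univ last]
    rw [show (∑ x : Fin k, if 0 < (x:ℕ) then (1:ℝ) else 0)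
        = ∑ x : Fin k, (1 - if x = z then (1:ℝ) else 0) by
      apply Finset.sum_congr rfl; intro x _
      by_cases h : x = z
      · simp [h, hz]
      · have : 0 < (x:ℕ) := by
          rcases Nat.eq_zero_or_pos (x:ℕ) with h0 | h0
          · exact absurd (by simp only [hz, Fin.ext_iff]; omega : x = z) h
          · exact h0
        simp [h, this]]
    rw [Finset.sum_sub_distrib, Finset.sum_ite_eq' Finset.univ z]
    simp only [Finset.sum_const, Finset.card_univ, Fintype.card_fin, nsmul_eq_mul, mul_one,
      Finset.mem_univ, if_true]
    ring
end

section
/- For k ≥ 2 and the distributions η_a(x) = (1 + 1{x>0})/(2k−1), η_b(y) = (1 + 1{y<k−1})/(2k−1) on {0,...,k−1}, the minimum median width satisfies ε*(η_a, η_b) = (1/2)·(2k−3)/(2k−1). -/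
open Finset

/-! ### Auxiliary definitions and lemmas -/

noncomputable def eta0 (k : ℕ) : Fin k → Fin k → ℝ := fun x y =>
  if (x:ℕ) = (y:ℕ) then (if (x:ℕ) = 0 ∨ (x:ℕ) = k-1 then 1/(2*(k:ℝ)-1) else 2/(2*(k:ℝ)-1))
  else if (x:ℕ) = k-1 ∧ (y:ℕ) = 0 then 1/(2*(k:ℝ)-1) else 0

noncomputable def eta1 (k : ℕ) : Fin k → Fin k → ℝ := fun x y =>
  if (x:ℕ) = (y:ℕ)+1 then 2/(2*(k:ℝ)-1)
  else if (x:ℕ) = 0 ∧ (y:ℕ) = k-1 then 1/(2*(k:ℝ)-1) else 0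

lemma hm_pos (k : ℕ) (hk : 2 ≤ k) : (0:ℝ) < 2*(k:ℝ)-1 := by
  have : (2:ℝ) ≤ (k:ℝ) := by exact_mod_cast hk
  linarith

lemma eta0_nonneg (k : ℕ) (hk : 2 ≤ k) (x y : Fin k) : 0 ≤ eta0 k x y := by
  have h := (hm_pos k hk).le
  unfold eta0; split_ifs <;> positivity

lemma eta1_nonneg (k : ℕ) (hk : 2 ≤ k) (x y : Fin k) : 0 ≤ eta1 k x y := by
  have h := (hm_pos k hk).le
  unfold eta1; split_ifs <;> positivity

lemma double_ind {k : ℕ} (a b : Fin k) (c : ℝ) :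
    ∑ x : Fin k, ∑ y : Fin k, (if x = a ∧ y = b then c else 0) = c := by
  simp [Finset.sum_ite_eq', ite_and]

lemma sumA (k : ℕ) (hk : 2 ≤ k) :
    ∑ x : Fin k, (1 + if 0 < (x:ℕ) then (1:ℝ) else 0) / (2*(k:ℝ)-1) = 1 := by
  have hk0 : 0 < k := by omega
  have key : ∀ x : Fin k, (1 + if 0 < (x:ℕ) then (1:ℝ) else 0) / (2*(k:ℝ)-1)
      = 2/(2*(k:ℝ)-1) - (if x = (⟨0, hk0⟩ : Fin k) then 1/(2*(k:ℝ)-1) else 0) := by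
    intro x
    by_cases h : x = (⟨0, hk0⟩ : Fin k)
    · have : (x:ℕ) = 0 := by rw [h]
      simp [h, this]; ring
    · have : 0 < (x:ℕ) := Nat.pos_of_ne_zero (fun hv => h (Fin.ext hv))
      simp [h, this]; ring
  rw [Finset.sum_congr rfl (fun x _ => key x), Finset.sum_sub_distrib]
  simp only [Finset.sum_ite_eq', mem_univ, if_true, Finset.sum_const, card_univ,
    Fintype.card_fin, nsmul_eq_mul]
  have hm : (2*(k:ℝ)-1) ≠ 0 := ne_of_gt (hm_pos k hk)
  field_simp
  have hm2 : ((k:ℝ)*2-1) ≠ 0 := by intro h; apply hm; linarith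
  field_simp

lemma margA_eta1 (k : ℕ) (hk : 2 ≤ k) (x : Fin k) :
    ∑ y, eta1 k x y = (1 + if 0 < (x:ℕ) then (1:ℝ) else 0) / (2*(k:ℝ)-1) := by
  by_cases hx : (x:ℕ) = 0
  · rw [Finset.sum_eq_single_of_mem (⟨k-1, by omega⟩ : Fin k) (mem_univ _)]
    · simp [eta1, hx]
    · intro b _ hb
      have hbv : (b:ℕ) ≠ k-1 := fun h => hb (Fin.ext h)
      simp [eta1, hx, hbv]
  · rw [Finset.sum_eq_single_of_mem (⟨(x:ℕ)-1, by omega⟩ : Fin k) (mem_univ _)]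
    · have : (x:ℕ) = ((x:ℕ)-1)+1 := by omega
      simp [eta1, ← this, Nat.pos_of_ne_zero hx]
      norm_num
    · intro b _ hb
      have hbv : (x:ℕ) ≠ (b:ℕ)+1 := by
        intro h; exact hb (Fin.ext (by simp only [Fin.val_mk]; omega))
      simp [eta1, hbv, hx]

lemma margB_eta1 (k : ℕ) (hk : 2 ≤ k) (y : Fin k) :
    ∑ x, eta1 k x y = (1 + if (y:ℕ) < k - 1 then (1:ℝ) else 0) / (2*(k:ℝ)-1) := by
  by_cases hy : (y:ℕ) < k - 1
  · rw [Finset.sum_eq_single_of_mem (⟨(y:ℕ)+1, by omega⟩ : Fin k) (mem_univ _)]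
    · simp [eta1, hy]
      norm_num
    · intro b _ hb
      have hbv : (b:ℕ) ≠ (y:ℕ)+1 := fun h => hb (Fin.ext h)
      have : (y:ℕ) ≠ k - 1 := by omega
      simp [eta1, hbv, this]
  · have hy' : (y:ℕ) = k - 1 := by have := y.isLt; omega
    rw [Finset.sum_eq_single_of_mem (⟨0, by omega⟩ : Fin k) (mem_univ _)]
    · have : (0:ℕ) ≠ (y:ℕ)+1 := by omega
      simp [eta1, this, hy', hy]
    · intro b _ hb
      have hbv : (b:ℕ) ≠ 0 := fun h => hb (Fin.ext h)
      have : (b:ℕ) ≠ (y:ℕ)+1 := by have := b.isLt; omega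
      simp [eta1, hbv, this, hy]

lemma margA_eta0 (k : ℕ) (hk : 2 ≤ k) (x : Fin k) :
    ∑ y, eta0 k x y = (1 + if 0 < (x:ℕ) then (1:ℝ) else 0) / (2*(k:ℝ)-1) := by
  by_cases hx : (x:ℕ) = 0
  · rw [Finset.sum_eq_single_of_mem x (mem_univ _)]
    · have : k - 1 ≠ 0 := by omega
      simp [eta0, hx, this]
    · intro b _ hb
      have hbv : (x:ℕ) ≠ (b:ℕ) := fun h => hb (Fin.ext h.symm)
      have : (x:ℕ) ≠ k - 1 := by omega
      simp [eta0, hbv, this]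
  · by_cases hx2 : (x:ℕ) = k - 1
    · have hne : x ≠ (⟨0, by omega⟩ : Fin k) := by
        intro h; exact hx (by rw [h])
      have key : ∀ y : Fin k, eta0 k x y =
          (if y = x then 1/(2*(k:ℝ)-1) else 0) + (if y = (⟨0, by omega⟩ : Fin k) then 1/(2*(k:ℝ)-1) else 0) := by
        intro y
        by_cases h1 : y = x
        · subst h1; simp [eta0, hx2, hne]
        · by_cases h2 : y = (⟨0, by omega⟩ : Fin k)
          · subst h2
            have : (x:ℕ) ≠ 0 := hx
            simp [eta0, hx, hx2, h1, this]
          · have hyv : (y:ℕ) ≠ 0 := fun h => h2 (Fin.ext h)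
            have hxy : (x:ℕ) ≠ (y:ℕ) := fun h => h1 (Fin.ext h.symm)
            simp [eta0, hxy, hyv, h1, h2]
      rw [Finset.sum_congr rfl (fun y _ => key y), Finset.sum_add_distrib]
      simp only [Finset.sum_ite_eq', mem_univ, if_true]
      have : 0 < (x:ℕ) := by omega
      simp [this]; ring
    · rw [Finset.sum_eq_single_of_mem x (mem_univ _)]
      · simp [eta0, hx, hx2, Nat.pos_of_ne_zero hx]
        norm_num
      · intro b _ hb
        have hbv : (x:ℕ) ≠ (b:ℕ) := fun h => hb (Fin.ext h.symm)
        simp [eta0, hbv, hx2]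

lemma margB_eta0 (k : ℕ) (hk : 2 ≤ k) (y : Fin k) :
    ∑ x, eta0 k x y = (1 + if (y:ℕ) < k - 1 then (1:ℝ) else 0) / (2*(k:ℝ)-1) := by
  by_cases hy : (y:ℕ) = 0
  · have hL : k - 1 < k := by omega
    have hne : y ≠ (⟨k-1, hL⟩ : Fin k) := by
      intro h; have : (y:ℕ) = k-1 := by rw [h]
      omega
    have key : ∀ x : Fin k, eta0 k x y =
        (if x = y then 1/(2*(k:ℝ)-1) else 0) + (if x = (⟨k-1, hL⟩ : Fin k) then 1/(2*(k:ℝ)-1) else 0) := by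
      intro x
      by_cases h1 : x = y
      · subst h1; simp [eta0, hy, hne]
      · by_cases h2 : x = (⟨k-1, hL⟩ : Fin k)
        · subst h2
          have hxv : (k-1 : ℕ) ≠ (y:ℕ) := by omega
          simp [eta0, hy, hxv, h1, Ne.symm hne]
        · have hxv : (x:ℕ) ≠ (y:ℕ) := fun h => h1 (Fin.ext h)
          have hxv2 : (x:ℕ) ≠ k - 1 := fun h => h2 (Fin.ext h)
          simp [eta0, hxv, hxv2, h1, h2]
    rw [Finset.sum_congr rfl (fun x _ => key x), Finset.sum_add_distrib]
    simp only [Finset.sum_ite_eq', mem_univ, if_true]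
    have : (y:ℕ) < k - 1 := by omega
    simp [this]; ring
  · by_cases hy2 : (y:ℕ) = k - 1
    · rw [Finset.sum_eq_single_of_mem y (mem_univ _)]
      · have : ¬ ((y:ℕ) < k - 1) := by omega
        simp [eta0, hy2, this]
      · intro b _ hb
        have hbv : (b:ℕ) ≠ (y:ℕ) := fun h => hb (Fin.ext h)
        simp [eta0, hbv, hy]
    · rw [Finset.sum_eq_single_of_mem y (mem_univ _)]
      · have h1 : (y:ℕ) < k - 1 := by have := y.isLt; omega
        simp [eta0, hy, hy2, h1]
        norm_num
      · intro b _ hb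
        have hbv : (b:ℕ) ≠ (y:ℕ) := fun h => hb (Fin.ext h)
        simp [eta0, hbv, hy]

lemma isJoint_eta0 (k : ℕ) (hk : 2 ≤ k) : IsJoint k (eta0 k) := by
  refine ⟨eta0_nonneg k hk, ?_⟩
  rw [Finset.sum_congr rfl (fun x _ => margA_eta0 k hk x)]
  exact sumA k hk

lemma isJoint_eta1 (k : ℕ) (hk : 2 ≤ k) : IsJoint k (eta1 k) := by
  refine ⟨eta1_nonneg k hk, ?_⟩
  rw [Finset.sum_congr rfl (fun x _ => margA_eta1 k hk x)]
  exact sumA k hk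

lemma qLow_le_one (k : ℕ) (r : ℝ) (η : Fin k → Fin k → ℝ) (hj : IsJoint k η) :
    qLow k r η ≤ 1 := by
  rw [← hj.2]
  refine Finset.sum_le_sum fun x _ => Finset.sum_le_sum fun y _ => ?_
  split_ifs
  · exact le_rfl
  · exact hj.1 x y

lemma qUp_nonneg (k : ℕ) (r : ℝ) (η : Fin k → Fin k → ℝ) (hj : IsJoint k η) :
    0 ≤ qUp k r η := by
  refine Finset.sum_nonneg fun x _ => Finset.sum_nonneg fun y _ => ?_
  split_ifs
  · exact hj.1 x y
  · exact le_rfl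

lemma qUp_zero_ge (k : ℕ) (hk : 2 ≤ k) (η : Fin k → Fin k → ℝ) (hj : IsJoint k η)
    (hA : margA k η = fun x : Fin k => (1 + if 0 < (x:ℕ) then (1:ℝ) else 0) / (2*(k:ℝ)-1)) :
    1/(2*(k:ℝ)-1) ≤ qUp k 0 η := by
  have hk0 : 0 < k := by omega
  set x0 : Fin k := ⟨0, hk0⟩
  have h1 : (∑ y : Fin k, if ((x0:ℕ):ℝ) - ((y:ℕ):ℝ) ≤ 0 then η x0 y else 0) = margA k η x0 := by
    refine Finset.sum_congr rfl fun y _ => ?_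
    have : ((x0:ℕ):ℝ) - ((y:ℕ):ℝ) ≤ 0 := by
      simp only [x0, Fin.val_mk, Nat.cast_zero]
      have : (0:ℝ) ≤ ((y:ℕ):ℝ) := Nat.cast_nonneg _
      linarith
    rw [if_pos this]
  have h2 : margA k η x0 = 1/(2*(k:ℝ)-1) := by rw [hA]; simp [x0]
  calc 1/(2*(k:ℝ)-1) = ∑ y : Fin k, if ((x0:ℕ):ℝ) - ((y:ℕ):ℝ) ≤ 0 then η x0 y else 0 := by
        rw [h1, h2]
    _ ≤ qUp k 0 η := by
        refine Finset.single_le_sum (f := fun x : Fin k => ∑ y : Fin k, if ((x:ℕ):ℝ) - ((y:ℕ):ℝ) ≤ 0 then η x y else 0) (fun x _ => ?_) (mem_univ x0)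
        refine Finset.sum_nonneg fun y _ => ?_
        split_ifs
        · exact hj.1 x y
        · exact le_rfl

lemma qLow_zero_le (k : ℕ) (hk : 2 ≤ k) (η : Fin k → Fin k → ℝ) (hj : IsJoint k η)
    (hA : margA k η = fun x : Fin k => (1 + if 0 < (x:ℕ) then (1:ℝ) else 0) / (2*(k:ℝ)-1)) :
    qLow k 0 η ≤ 1 - 2/(2*(k:ℝ)-1) := by
  have hL : k - 1 < k := by omega
  set xL : Fin k := ⟨k-1, hL⟩ with hxL
  have key : ∀ x : Fin k, (∑ y : Fin k, if ((x:ℕ):ℝ) - ((y:ℕ):ℝ) < 0 then η x y else 0)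
      ≤ (margA k η x - if x = xL then margA k η xL else 0) := by
    intro x
    by_cases hx : x = xL
    · subst hx
      rw [if_pos rfl, sub_self]
      refine le_of_eq (Finset.sum_eq_zero fun y _ => ?_)
      rw [if_neg]
      have h1 : (y:ℕ) ≤ k - 1 := by have := y.isLt; omega
      have h2 : ((y:ℕ):ℝ) ≤ ((k-1:ℕ):ℝ) := by exact_mod_cast h1
      simp only [hxL, Fin.val_mk]
      linarith
    · rw [if_neg hx, sub_zero]
      refine Finset.sum_le_sum fun y _ => ?_
      split_ifs
      · exact le_rfl
      · exact hj.1 x y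
  calc qLow k 0 η ≤ ∑ x, (margA k η x - if x = xL then margA k η xL else 0) :=
        Finset.sum_le_sum fun x _ => key x
    _ = (∑ x, margA k η x) - margA k η xL := by
        rw [Finset.sum_sub_distrib, Finset.sum_ite_eq', if_pos (mem_univ _)]
    _ = 1 - 2/(2*(k:ℝ)-1) := by
        have hs : (∑ x, margA k η x) = 1 := hj.2
        have hv : margA k η xL = 2/(2*(k:ℝ)-1) := by
          rw [hA]
          have : 0 < ((xL:ℕ)) := by simp [hxL]; omega
          simp [this]; norm_num
        rw [hs, hv]

lemma qUp_eta1_le (k : ℕ) (hk : 2 ≤ k) (r : ℝ) (hr : r ≤ 0) :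
    qUp k r (eta1 k) ≤ 1/(2*(k:ℝ)-1) := by
  have hk0 : 0 < k := by omega
  have hL : k - 1 < k := by omega
  have key : ∀ x y : Fin k, (if ((x:ℕ):ℝ) - ((y:ℕ):ℝ) ≤ r then eta1 k x y else 0)
      ≤ (if x = (⟨0, hk0⟩ : Fin k) ∧ y = (⟨k-1, hL⟩ : Fin k) then 1/(2*(k:ℝ)-1) else 0) := by
    intro x y
    by_cases hc : ((x:ℕ):ℝ) - ((y:ℕ):ℝ) ≤ r
    · rw [if_pos hc]
      have hxy : (x:ℕ) ≤ (y:ℕ) := by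
        have : ((x:ℕ):ℝ) ≤ ((y:ℕ):ℝ) := by linarith
        exact_mod_cast this
      have h1 : (x:ℕ) ≠ (y:ℕ)+1 := by omega
      by_cases h2 : (x:ℕ) = 0 ∧ (y:ℕ) = k-1
      · have : x = (⟨0, hk0⟩ : Fin k) ∧ y = (⟨k-1, hL⟩ : Fin k) :=
          ⟨Fin.ext h2.1, Fin.ext h2.2⟩
        rw [if_pos this]
        simp [eta1, h1, h2.1, h2.2]
      · have : ¬ (x = (⟨0, hk0⟩ : Fin k) ∧ y = (⟨k-1, hL⟩ : Fin k)) := by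
          intro h; exact h2 ⟨by rw [h.1], by rw [h.2]⟩
        rw [if_neg this]
        simp [eta1, h1, h2]
    · rw [if_neg hc]
      have hm := hm_pos k hk
      split_ifs
      · exact div_nonneg one_pos.le hm.le
      · exact le_rfl
  calc qUp k r (eta1 k)
      ≤ ∑ x : Fin k, ∑ y : Fin k, (if x = (⟨0, hk0⟩ : Fin k) ∧ y = (⟨k-1, hL⟩ : Fin k) then 1/(2*(k:ℝ)-1) else 0) :=
        Finset.sum_le_sum fun x _ => Finset.sum_le_sum fun y _ => key x y
    _ = 1/(2*(k:ℝ)-1) := double_ind _ _ _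

lemma qLow_eta0_ge (k : ℕ) (hk : 2 ≤ k) (r : ℝ) (hr : 1 ≤ r) :
    1 - 1/(2*(k:ℝ)-1) ≤ qLow k r (eta0 k) := by
  have hk0 : 0 < k := by omega
  have hL : k - 1 < k := by omega
  have hm := hm_pos k hk
  have key : ∀ x y : Fin k, (if y = x then eta0 k x y else 0)
      ≤ (if ((x:ℕ):ℝ) - ((y:ℕ):ℝ) < r then eta0 k x y else 0) := by
    intro x y
    by_cases h : y = x
    · subst h
      rw [if_pos rfl, if_pos (by linarith [sub_self ((y:ℕ):ℝ)] : ((y:ℕ):ℝ) - ((y:ℕ):ℝ) < r)]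
    · rw [if_neg h]
      split_ifs
      · unfold eta0; split_ifs <;> positivity
      · exact le_rfl
  have diag : ∑ x : Fin k, ∑ y : Fin k, (if y = x then eta0 k x y else 0)
      = ∑ x : Fin k, eta0 k x x := by
    refine Finset.sum_congr rfl fun x _ => ?_
    rw [Finset.sum_ite_eq', if_pos (mem_univ _)]
  have diagval : ∀ x : Fin k, eta0 k x x =
      2/(2*(k:ℝ)-1) - (if x = (⟨0, hk0⟩ : Fin k) then 1/(2*(k:ℝ)-1) else 0)
        - (if x = (⟨k-1, hL⟩ : Fin k) then 1/(2*(k:ℝ)-1) else 0) := by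
    intro x
    have hne : (⟨0, hk0⟩ : Fin k) ≠ (⟨k-1, hL⟩ : Fin k) := by
      intro h
      have : (0:ℕ) = k-1 := congrArg Fin.val h
      omega
    by_cases h1 : x = (⟨0, hk0⟩ : Fin k)
    · have hv : (x:ℕ) = 0 := by rw [h1]
      have hz : (0:ℕ) ≠ k-1 := by omega
      simp [eta0, hv, h1, h1.symm ▸ hne, hz]
      ring
    · by_cases h2 : x = (⟨k-1, hL⟩ : Fin k)
      · have hv : (x:ℕ) = k-1 := by rw [h2]
        have hz : k-1 ≠ (0:ℕ) := by omega
        simp [eta0, hv, h1, h2, hz]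
        ring
      · have hv1 : (x:ℕ) ≠ 0 := fun h => h1 (Fin.ext h)
        have hv2 : (x:ℕ) ≠ k-1 := fun h => h2 (Fin.ext h)
        simp [eta0, hv1, hv2, h1, h2]
  have sumdiag : ∑ x : Fin k, eta0 k x x = 1 - 1/(2*(k:ℝ)-1) := by
    rw [Finset.sum_congr rfl (fun x _ => diagval x)]
    rw [Finset.sum_sub_distrib, Finset.sum_sub_distrib]
    simp only [Finset.sum_ite_eq', mem_univ, if_true, Finset.sum_const, card_univ,
      Fintype.card_fin, nsmul_eq_mul]
    have hm' : (2*(k:ℝ)-1) ≠ 0 := ne_of_gt hm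
    field_simp
    have hm2 : ((k:ℝ)*2-1) ≠ 0 := by intro h; apply hm'; linarith
    field_simp
  calc 1 - 1/(2*(k:ℝ)-1) = ∑ x : Fin k, ∑ y : Fin k, (if y = x then eta0 k x y else 0) := by
        rw [diag, sumdiag]
    _ ≤ qLow k r (eta0 k) :=
        Finset.sum_le_sum fun x _ => Finset.sum_le_sum fun y _ => key x y

theorem stmt10 (k : ℕ) (hk : 2 ≤ k) :
    epsStar k (fun x => (1 + if 0 < (x : ℕ) then (1:ℝ) else 0) / (2*(k:ℝ)-1))
              (fun y => (1 + if (y : ℕ) < k - 1 then (1:ℝ) else 0) / (2*(k:ℝ)-1))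
      = (1/2) * (2*(k:ℝ)-3)/(2*(k:ℝ)-1) := by
  have hm := hm_pos k hk
  have hk2 : (2:ℝ) ≤ (k:ℝ) := by exact_mod_cast hk
  set A : Fin k → ℝ := fun x => (1 + if 0 < (x : ℕ) then (1:ℝ) else 0) / (2*(k:ℝ)-1) with hA
  set B : Fin k → ℝ := fun y => (1 + if (y : ℕ) < k - 1 then (1:ℝ) else 0) / (2*(k:ℝ)-1) with hB
  set t : ℝ := (1/2) * (2*(k:ℝ)-3)/(2*(k:ℝ)-1) with htdef
  have ht : t = 1/2 - 1/(2*(k:ℝ)-1) := by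
    rw [htdef]; field_simp; ring
  have ht0 : 0 ≤ t := by
    rw [ht]
    rw [sub_nonneg, div_le_div_iff₀ hm (by norm_num : (0:ℝ) < 2)]
    linarith
  have hA0 : margA k (eta0 k) = A := funext fun x => margA_eta0 k hk x
  have hB0 : margB k (eta0 k) = B := funext fun y => margB_eta0 k hk y
  have hA1 : margA k (eta1 k) = A := funext fun x => margA_eta1 k hk x
  have hB1 : margB k (eta1 k) = B := funext fun y => margB_eta1 k hk y
  have hj0 := isJoint_eta0 k hk
  have hj1 := isJoint_eta1 k hk
  -- membership of the two couplings
  have memL0 : ∀ r : ℝ, qLow k r (eta0 k) ∈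
      {v | ∃ η, IsJoint k η ∧ margA k η = A ∧ margB k η = B ∧ v = qLow k r η} :=
    fun r => ⟨eta0 k, hj0, hA0, hB0, rfl⟩
  have memL1 : ∀ r : ℝ, qLow k r (eta1 k) ∈
      {v | ∃ η, IsJoint k η ∧ margA k η = A ∧ margB k η = B ∧ v = qLow k r η} :=
    fun r => ⟨eta1 k, hj1, hA1, hB1, rfl⟩
  have memU1 : ∀ r : ℝ, qUp k r (eta1 k) ∈
      {v | ∃ η, IsJoint k η ∧ margA k η = A ∧ margB k η = B ∧ v = qUp k r η} :=
    fun r => ⟨eta1 k, hj1, hA1, hB1, rfl⟩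
  have bddL : ∀ r : ℝ, BddAbove {v | ∃ η, IsJoint k η ∧ margA k η = A ∧ margB k η = B ∧ v = qLow k r η} := by
    intro r
    refine ⟨1, ?_⟩
    rintro v ⟨η, hη, -, -, rfl⟩
    exact qLow_le_one k r η hη
  have bddU : ∀ r : ℝ, BddBelow {v | ∃ η, IsJoint k η ∧ margA k η = A ∧ margB k η = B ∧ v = qUp k r η} := by
    intro r
    refine ⟨0, ?_⟩
    rintro v ⟨η, hη, -, -, rfl⟩
    exact qUp_nonneg k r η hη
  -- nu bounds
  have nuL0_le : nuL k 0 A B ≤ 1 - 2/(2*(k:ℝ)-1) := by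
    refine csSup_le ⟨_, memL1 0⟩ ?_
    rintro v ⟨η, hη, hηA, -, rfl⟩
    exact qLow_zero_le k hk η hη (hηA.trans hA)
  have nuU0_ge : 1/(2*(k:ℝ)-1) ≤ nuU k 0 A B := by
    refine le_csInf ⟨_, memU1 0⟩ ?_
    rintro v ⟨η, hη, hηA, -, rfl⟩
    exact qUp_zero_ge k hk η hη (hηA.trans hA)
  have nuU_le : ∀ r : ℝ, r ≤ 0 → nuU k r A B ≤ 1/(2*(k:ℝ)-1) := fun r hr =>
    le_trans (csInf_le (bddU r) (memU1 r)) (qUp_eta1_le k hk r hr)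
  have nuL_ge : ∀ r : ℝ, 1 ≤ r → 1 - 1/(2*(k:ℝ)-1) ≤ nuL k r A B := fun r hr =>
    le_trans (qLow_eta0_ge k hk r hr) (le_csSup (bddL r) (memL0 r))
  -- width at 0 equals t
  have h12 : 1/(2*(k:ℝ)-1) ≤ 2/(2*(k:ℝ)-1) := by
    gcongr
    norm_num
  have width0 : widthOf k 0 A B = t := by
    unfold widthOf
    have hU : nuU k 0 A B = 1/(2*(k:ℝ)-1) := le_antisymm (nuU_le 0 le_rfl) nuU0_ge
    have h2 : max (1/2 - nuU k 0 A B) 0 = t := by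
      rw [hU, ← ht]
      exact max_eq_left ht0
    have h1 : max (nuL k 0 A B - 1/2) 0 ≤ t := by
      refine max_le ?_ ht0
      rw [ht]
      linarith
    rw [h2]
    exact max_eq_right h1
  -- the target value is attained at r = 0
  have memE : t ∈ {e | ∃ r : ℤ, -((k : ℤ) - 1) ≤ r ∧ r ≤ (k : ℤ) - 1 ∧ e = widthOf k (r : ℝ) A B} := by
    refine ⟨0, by omega, by omega, ?_⟩
    rw [Int.cast_zero, width0]
  -- lower bound
  have lb : ∀ e ∈ {e | ∃ r : ℤ, -((k : ℤ) - 1) ≤ r ∧ r ≤ (k : ℤ) - 1 ∧ e = widthOf k (r : ℝ) A B}, t ≤ e := by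
    rintro e ⟨r, hr1, hr2, rfl⟩
    rcases le_or_gt r 0 with hr | hr
    · have hrr : ((r:ℝ)) ≤ 0 := by exact_mod_cast hr
      have := nuU_le (r:ℝ) hrr
      calc t = 1/2 - 1/(2*(k:ℝ)-1) := ht
        _ ≤ 1/2 - nuU k (r:ℝ) A B := by linarith
        _ ≤ max (1/2 - nuU k (r:ℝ) A B) 0 := le_max_left _ _
        _ ≤ widthOf k (r:ℝ) A B := le_max_right _ _
    · have hrr : (1:ℝ) ≤ (r:ℝ) := by exact_mod_cast hr
      have := nuL_ge (r:ℝ) hrr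
      calc t = 1/2 - 1/(2*(k:ℝ)-1) := ht
        _ ≤ nuL k (r:ℝ) A B - 1/2 := by linarith
        _ ≤ max (nuL k (r:ℝ) A B - 1/2) 0 := le_max_left _ _
        _ ≤ widthOf k (r:ℝ) A B := le_max_left _ _
  -- conclude
  refine le_antisymm (csInf_le ⟨t, fun e he => lb e he⟩ memE) (le_csInf ⟨t, memE⟩ lb)
end

section
/- Let η_a, ρ_a, η_b, ρ_b be distributions on {0,...,k−1} with d_TV(η_a,ρ_a) ≤ δ and d_TV(η_b,ρ_b) ≤ δ. Then for every integer r, |ν_ℓ(r, η_a, η_b) − ν_ℓ(r, ρ_a, ρ_b)| ≤ 2δ and |ν_u(r, η_a, η_b) − ν_u(r, ρ_a, ρ_b)| ≤ 2δ. -/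
open Finset

lemma dTV_nonneg (k : ℕ) (p q : Fin k → ℝ) : 0 ≤ dTV k p q := by
  unfold dTV; positivity

lemma dTV_symm (k : ℕ) (p q : Fin k → ℝ) : dTV k p q = dTV k q p := by
  unfold dTV; simp [abs_sub_comm]

lemma coupling_exists (k : ℕ) (p q : Fin k → ℝ) (hp : IsDist k p) (hq : IsDist k q) :
    ∃ γ : Fin k → Fin k → ℝ, (∀ x y, 0 ≤ γ x y) ∧
      (∀ x, ∑ y, γ x y = p x) ∧ (∀ y, ∑ x, γ x y = q y) ∧
      ∑ x, ∑ y, (if x = y then (0:ℝ) else γ x y) ≤ dTV k p q := by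
  classical
  set m : Fin k → ℝ := fun x => min (p x) (q x) with hm
  set s : ℝ := ∑ x, m x with hs
  have hmp : ∀ x, m x ≤ p x := fun x => min_le_left _ _
  have hmq : ∀ x, m x ≤ q x := fun x => min_le_right _ _
  have hm0 : ∀ x, 0 ≤ m x := fun x => le_min (hp.1 x) (hq.1 x)
  have habs : ∀ x, |p x - q x| = p x + q x - 2 * m x := by
    intro x; rcases le_total (p x) (q x) with h | h
    · rw [abs_of_nonpos (by linarith), hm]; simp only [min_eq_left h]; ring
    · rw [abs_of_nonneg (by linarith), hm]; simp only [min_eq_right h]; ring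
  have hsum : ∑ x, |p x - q x| = 2 - 2 * s := by
    rw [Finset.sum_congr rfl (fun x _ => habs x)]
    rw [Finset.sum_sub_distrib, Finset.sum_add_distrib, ← Finset.mul_sum, hp.2, hq.2, ← hs]
    ring
  have hdtv : dTV k p q = 1 - s := by unfold dTV; rw [hsum]; ring
  have hqm : ∑ x, (q x - m x) = 1 - s := by
    rw [Finset.sum_sub_distrib, hq.2, ← hs]
  have hpm : ∑ x, (p x - m x) = 1 - s := by
    rw [Finset.sum_sub_distrib, hp.2, ← hs]
  by_cases hs1 : s = 1
  · have hmeqp : ∀ x, m x = p x := by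
      intro x
      by_contra hne
      have hlt : m x < p x := lt_of_le_of_ne (hmp x) hne
      have : s < ∑ x, p x :=
        Finset.sum_lt_sum (fun i _ => hmp i) ⟨x, Finset.mem_univ x, hlt⟩
      rw [hp.2] at this; linarith
    have hmeqq : ∀ x, m x = q x := by
      intro x
      by_contra hne
      have hlt : m x < q x := lt_of_le_of_ne (hmq x) hne
      have : s < ∑ x, q x :=
        Finset.sum_lt_sum (fun i _ => hmq i) ⟨x, Finset.mem_univ x, hlt⟩
      rw [hq.2] at this; linarith
    refine ⟨fun x y => if x = y then p x else 0, ?_, ?_, ?_, ?_⟩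
    · intro x y; dsimp only; split
      · exact hp.1 x
      · exact le_rfl
    · intro x; dsimp only; rw [Finset.sum_ite_eq]; simp
    · intro y; dsimp only
      simp only [Finset.sum_ite_eq', Finset.mem_univ, if_true]
      rw [← hmeqp y, hmeqq y]
    · have h0 : ∀ x : Fin k, ∑ y : Fin k, (if x = y then (0:ℝ) else if x = y then p x else 0) = 0 := by
        intro x; apply Finset.sum_eq_zero; intro y _; split <;> simp
      dsimp only
      rw [Finset.sum_congr rfl (fun x _ => h0 x), Finset.sum_const, smul_zero]
      exact dTV_nonneg k p q
  · have hsle : s ≤ 1 := by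
      have h := Finset.sum_le_sum (fun i (_ : i ∈ (Finset.univ : Finset (Fin k))) => hmp i)
      rw [hp.2] at h; exact h
    have hslt : (0:ℝ) < 1 - s := by
      have := lt_of_le_of_ne hsle hs1; linarith
    refine ⟨fun x y => (if x = y then m x else 0) + (p x - m x) / (1 - s) * (q y - m y),
      ?_, ?_, ?_, ?_⟩
    · intro x y
      dsimp only
      have h1 : (0:ℝ) ≤ if x = y then m x else 0 := by
        by_cases h : x = y <;> simp [h]
        exact hm0 y
      have h2 : 0 ≤ (p x - m x) / (1 - s) * (q y - m y) := by
        apply mul_nonneg (div_nonneg (by linarith [hmp x]) (le_of_lt hslt)) (by linarith [hmq y])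
      linarith
    · intro x
      dsimp only
      rw [Finset.sum_add_distrib, ← Finset.mul_sum, hqm]
      simp only [Finset.sum_ite_eq, Finset.mem_univ, if_true]
      rw [div_mul_cancel₀ _ (ne_of_gt hslt)]
      ring
    · intro y
      dsimp only
      rw [Finset.sum_add_distrib]
      simp only [Finset.sum_ite_eq', Finset.mem_univ, if_true]
      have : ∑ x, (p x - m x) / (1 - s) * (q y - m y)
          = (∑ x, (p x - m x)) * ((q y - m y) / (1 - s)) := by
        rw [Finset.sum_mul]
        apply Finset.sum_congr rfl; intro x _; ring
      rw [this, hpm]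
      field_simp
      ring
    · dsimp only
      rw [hdtv]
      have hle : ∀ x y : Fin k,
          (if x = y then (0:ℝ) else (if x = y then m x else 0) + (p x - m x) / (1 - s) * (q y - m y))
          ≤ (p x - m x) / (1 - s) * (q y - m y) := by
        intro x y
        split
        · apply mul_nonneg (div_nonneg (by linarith [hmp x]) (le_of_lt hslt)) (by linarith [hmq y])
        · simp
      calc ∑ x, ∑ y, (if x = y then (0:ℝ) else (if x = y then m x else 0) + (p x - m x) / (1 - s) * (q y - m y))
          ≤ ∑ x, ∑ y, (p x - m x) / (1 - s) * (q y - m y) := by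
            apply Finset.sum_le_sum; intro x _
            apply Finset.sum_le_sum; intro y _
            exact hle x y
        _ = 1 - s := by
            have : ∀ x : Fin k, ∑ y, (p x - m x) / (1 - s) * (q y - m y)
                = (p x - m x) / (1 - s) * (1 - s) := by
              intro x; rw [← Finset.mul_sum, hqm]
            rw [Finset.sum_congr rfl (fun x _ => this x)]
            have : ∀ x : Fin k, (p x - m x) / (1 - s) * (1 - s) = p x - m x := by
              intro x; rw [div_mul_cancel₀ _ (ne_of_gt hslt)]
            rw [Finset.sum_congr rfl (fun x _ => this x), hpm]

lemma transferA (k : ℕ) (η : Fin k → Fin k → ℝ) (pa pb ρa : Fin k → ℝ)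
    (hη : IsJoint k η) (hA : margA k η = pa) (hB : margB k η = pb)
    (hρa : IsDist k ρa) :
    ∃ ρ : Fin k → Fin k → ℝ, IsJoint k ρ ∧ margA k ρ = ρa ∧ margB k ρ = pb ∧
      ∀ c : Fin k → Fin k → ℝ, (∀ x y, 0 ≤ c x y ∧ c x y ≤ 1) →
        |(∑ x, ∑ y, c x y * η x y) - (∑ x, ∑ y, c x y * ρ x y)| ≤ dTV k pa ρa := by
  classical
  have hpa : IsDist k pa := by
    constructor
    · intro x; rw [← hA]; exact Finset.sum_nonneg (fun y _ => hη.1 x y)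
    · rw [← hη.2]; apply Finset.sum_congr rfl; intro x _; rw [← hA]; rfl
  obtain ⟨γ, hγ0, hγrow, hγcol, hγoff⟩ := coupling_exists k pa ρa hpa hρa
  -- w x y : conditional distribution of y given x under η
  set w : Fin k → Fin k → ℝ := fun x y => if pa x = 0 then 0 else η x y / pa x with hw
  have hpa0 : ∀ x y, pa x = 0 → η x y = 0 := by
    intro x y h
    have hsum : ∑ y, η x y = 0 := by rw [← hA] at h; exact h
    exact (Finset.sum_eq_zero_iff_of_nonneg (fun y _ => hη.1 x y)).1 hsum y (Finset.mem_univ y)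
  have hw0 : ∀ x y, 0 ≤ w x y := by
    intro x y; rw [hw]; dsimp only; split
    · exact le_rfl
    · exact div_nonneg (hη.1 x y) (hpa.1 x)
  have hwsum : ∀ x, ∑ y, w x y = if pa x = 0 then 0 else 1 := by
    intro x; rw [hw]; dsimp only
    by_cases h : pa x = 0 <;> simp only [h, if_true, if_false]
    · simp
    · rw [← Finset.sum_div]
      rw [show ∑ y, η x y = pa x from by rw [← hA]; rfl]
      exact div_self h
  have hwsum_le : ∀ x, ∑ y, w x y ≤ 1 := by
    intro x; rw [hwsum x]; split <;> norm_num
  have hηw : ∀ x y, η x y = pa x * w x y := by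
    intro x y; rw [hw]; dsimp only
    by_cases h : pa x = 0
    · simp [h, hpa0 x y h]
    · rw [if_neg h, mul_div_cancel₀ _ h]
  have hγ0' : ∀ x x', pa x = 0 → γ x x' = 0 := by
    intro x x' h
    have hsum : ∑ x', γ x x' = 0 := by rw [hγrow x, h]
    exact (Finset.sum_eq_zero_iff_of_nonneg (fun y _ => hγ0 x y)).1 hsum x' (Finset.mem_univ x')
  refine ⟨fun x' y => ∑ x, γ x x' * w x y, ?_, ?_, ?_, ?_⟩
  case refine_2 =>
    -- margA ρ = ρa
    funext x'
    show ∑ y, ∑ x, γ x x' * w x y = ρa x'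
    rw [Finset.sum_comm]
    calc ∑ x, ∑ y, γ x x' * w x y = ∑ x, γ x x' * ∑ y, w x y := by
          apply Finset.sum_congr rfl; intro x _; rw [Finset.mul_sum]
      _ = ∑ x, γ x x' := by
          apply Finset.sum_congr rfl; intro x _
          rw [hwsum x]
          by_cases h : pa x = 0
          · simp [h, hγ0' x x' h]
          · simp [h]
      _ = ρa x' := hγcol x'
  case refine_3 =>
    -- margB ρ = pb
    funext y
    show ∑ x', ∑ x, γ x x' * w x y = pb y
    rw [Finset.sum_comm]
    calc ∑ x, ∑ x', γ x x' * w x y = ∑ x, pa x * w x y := by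
          apply Finset.sum_congr rfl; intro x _
          rw [← Finset.sum_mul, hγrow x]
      _ = ∑ x, η x y := by
          apply Finset.sum_congr rfl; intro x _; rw [← hηw]
      _ = pb y := by rw [← hB]; rfl
  case refine_1 =>
    constructor
    · intro x' y
      exact Finset.sum_nonneg (fun x _ => mul_nonneg (hγ0 x x') (hw0 x y))
    · -- total mass 1
      have : ∀ x' : Fin k, ∑ y, ∑ x, γ x x' * w x y = ρa x' := by
        intro x'
        rw [Finset.sum_comm]
        calc ∑ x, ∑ y, γ x x' * w x y = ∑ x, γ x x' * ∑ y, w x y := by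
              apply Finset.sum_congr rfl; intro x _; rw [Finset.mul_sum]
          _ = ∑ x, γ x x' := by
              apply Finset.sum_congr rfl; intro x _
              rw [hwsum x]
              by_cases h : pa x = 0
              · simp [h, hγ0' x x' h]
              · simp [h]
          _ = ρa x' := hγcol x'
      rw [Finset.sum_congr rfl (fun x' _ => this x')]
      exact hρa.2
  case refine_4 =>
    intro c hc
    -- rewrite both sums as triple sums
    have hE1 : (∑ x, ∑ y, c x y * η x y) = ∑ x, ∑ x', ∑ y, γ x x' * w x y * c x y := by
      apply Finset.sum_congr rfl; intro x _
      rw [Finset.sum_comm]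
      apply Finset.sum_congr rfl; intro y _
      rw [hηw x y, ← hγrow x, Finset.sum_mul, Finset.mul_sum]
      apply Finset.sum_congr rfl; intro x' _; ring
    have hE2 : (∑ x', ∑ y, c x' y * (∑ x, γ x x' * w x y))
        = ∑ x, ∑ x', ∑ y, γ x x' * w x y * c x' y := by
      calc ∑ x', ∑ y, c x' y * (∑ x, γ x x' * w x y)
          = ∑ x', ∑ y, ∑ x, γ x x' * w x y * c x' y := by
            apply Finset.sum_congr rfl; intro x' _
            apply Finset.sum_congr rfl; intro y _
            rw [Finset.mul_sum]
            apply Finset.sum_congr rfl; intro x _; ring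
        _ = ∑ x', ∑ x, ∑ y, γ x x' * w x y * c x' y := by
            apply Finset.sum_congr rfl; intro x' _
            exact Finset.sum_comm
        _ = ∑ x, ∑ x', ∑ y, γ x x' * w x y * c x' y := Finset.sum_comm
    rw [hE1, hE2]
    rw [← Finset.sum_sub_distrib]
    have step1 : |∑ x, ((∑ x', ∑ y, γ x x' * w x y * c x y) - (∑ x', ∑ y, γ x x' * w x y * c x' y))|
        ≤ ∑ x, ∑ x', (if x = x' then (0:ℝ) else γ x x') := by
      calc |∑ x, ((∑ x', ∑ y, γ x x' * w x y * c x y) - (∑ x', ∑ y, γ x x' * w x y * c x' y))|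
          ≤ ∑ x, |(∑ x', ∑ y, γ x x' * w x y * c x y) - (∑ x', ∑ y, γ x x' * w x y * c x' y)| :=
            Finset.abs_sum_le_sum_abs _ _
        _ ≤ ∑ x, ∑ x', (if x = x' then (0:ℝ) else γ x x') := by
            apply Finset.sum_le_sum; intro x _
            rw [← Finset.sum_sub_distrib]
            calc |∑ x', ((∑ y, γ x x' * w x y * c x y) - (∑ y, γ x x' * w x y * c x' y))|
                ≤ ∑ x', |(∑ y, γ x x' * w x y * c x y) - (∑ y, γ x x' * w x y * c x' y)| :=
                  Finset.abs_sum_le_sum_abs _ _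
              _ ≤ ∑ x', (if x = x' then (0:ℝ) else γ x x') := by
                  apply Finset.sum_le_sum; intro x' _
                  by_cases h : x = x'
                  · subst h; simp
                  · rw [if_neg h, ← Finset.sum_sub_distrib]
                    calc |∑ y, (γ x x' * w x y * c x y - γ x x' * w x y * c x' y)|
                        ≤ ∑ y, |γ x x' * w x y * c x y - γ x x' * w x y * c x' y| :=
                          Finset.abs_sum_le_sum_abs _ _
                      _ ≤ ∑ y, γ x x' * w x y := by
                          apply Finset.sum_le_sum; intro y _
                          rw [← mul_sub]
                          rw [abs_mul]
                          have h1 : |γ x x' * w x y| = γ x x' * w x y :=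
                            abs_of_nonneg (mul_nonneg (hγ0 x x') (hw0 x y))
                          rw [h1]
                          have h2 : |c x y - c x' y| ≤ 1 := by
                            have := hc x y; have := hc x' y
                            rw [abs_le]; constructor <;> linarith [(hc x y).1, (hc x y).2, (hc x' y).1, (hc x' y).2]
                          calc γ x x' * w x y * |c x y - c x' y| ≤ γ x x' * w x y * 1 := by
                                apply mul_le_mul_of_nonneg_left h2
                                  (mul_nonneg (hγ0 x x') (hw0 x y))
                            _ = γ x x' * w x y := mul_one _
                      _ = γ x x' * ∑ y, w x y := by rw [Finset.mul_sum]
                      _ ≤ γ x x' * 1 := mul_le_mul_of_nonneg_left (hwsum_le x) (hγ0 x x')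
                      _ = γ x x' := mul_one _
    exact le_trans step1 hγoff

lemma transferB (k : ℕ) (η : Fin k → Fin k → ℝ) (pa pb ρb : Fin k → ℝ)
    (hη : IsJoint k η) (hA : margA k η = pa) (hB : margB k η = pb)
    (hρb : IsDist k ρb) :
    ∃ ρ : Fin k → Fin k → ℝ, IsJoint k ρ ∧ margA k ρ = pa ∧ margB k ρ = ρb ∧
      ∀ c : Fin k → Fin k → ℝ, (∀ x y, 0 ≤ c x y ∧ c x y ≤ 1) →
        |(∑ x, ∑ y, c x y * η x y) - (∑ x, ∑ y, c x y * ρ x y)| ≤ dTV k pb ρb := by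
  have hηT : IsJoint k (fun x y => η y x) :=
    ⟨fun x y => hη.1 y x, by rw [Finset.sum_comm]; exact hη.2⟩
  have hAT : margA k (fun x y => η y x) = pb := by
    funext x; rw [← hB]; rfl
  have hBT : margB k (fun x y => η y x) = pa := by
    funext y; rw [← hA]; rfl
  obtain ⟨ρ', hρ'j, hρ'A, hρ'B, hρ'c⟩ := transferA k (fun x y => η y x) pb pa ρb hηT hAT hBT hρb
  refine ⟨fun x y => ρ' y x, ?_, ?_, ?_, ?_⟩
  · exact ⟨fun x y => hρ'j.1 y x, by rw [Finset.sum_comm]; exact hρ'j.2⟩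
  · funext x
    show ∑ y, ρ' y x = pa x
    rw [← congrFun hρ'B x]; rfl
  · funext y
    show ∑ x, ρ' y x = ρb y
    rw [← congrFun hρ'A y]; rfl
  · intro c hc
    have h := hρ'c (fun x y => c y x) (fun x y => hc y x)
    have e1 : (∑ x, ∑ y, (fun x y => c y x) x y * η y x) = ∑ x, ∑ y, c x y * η x y := by
      rw [Finset.sum_comm]
    have e2 : (∑ x, ∑ y, (fun x y => c y x) x y * ρ' x y) = ∑ x, ∑ y, c x y * ρ' y x := by
      rw [Finset.sum_comm]
    simp only at h e1 e2
    rw [e1, e2] at h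
    exact h

lemma two_step (k : ℕ) (ηa ηb ρa ρb : Fin k → ℝ) (δ : ℝ)
    (h2 : IsDist k ρa) (h4 : IsDist k ρb)
    (hda : dTV k ηa ρa ≤ δ) (hdb : dTV k ηb ρb ≤ δ)
    (η : Fin k → Fin k → ℝ) (hη : IsJoint k η)
    (hA : margA k η = ηa) (hB : margB k η = ηb) :
    ∃ ρ : Fin k → Fin k → ℝ, IsJoint k ρ ∧ margA k ρ = ρa ∧ margB k ρ = ρb ∧
      ∀ c : Fin k → Fin k → ℝ, (∀ x y, 0 ≤ c x y ∧ c x y ≤ 1) →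
        |(∑ x, ∑ y, c x y * η x y) - (∑ x, ∑ y, c x y * ρ x y)| ≤ 2 * δ := by
  obtain ⟨ρ1, hρ1j, hρ1A, hρ1B, hρ1c⟩ := transferA k η ηa ηb ρa hη hA hB h2
  obtain ⟨ρ, hρj, hρA, hρB, hρc⟩ := transferB k ρ1 ρa ηb ρb hρ1j hρ1A hρ1B h4
  refine ⟨ρ, hρj, hρA, hρB, ?_⟩
  intro c hc
  have t1 := hρ1c c hc
  have t2 := hρc c hc
  calc |(∑ x, ∑ y, c x y * η x y) - (∑ x, ∑ y, c x y * ρ x y)|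
      ≤ |(∑ x, ∑ y, c x y * η x y) - (∑ x, ∑ y, c x y * ρ1 x y)|
        + |(∑ x, ∑ y, c x y * ρ1 x y) - (∑ x, ∑ y, c x y * ρ x y)| := abs_sub_le _ _ _
    _ ≤ dTV k ηa ρa + dTV k ηb ρb := add_le_add t1 t2
    _ ≤ 2 * δ := by linarith

lemma sSup_abs_le {S T : Set ℝ} (hS : S.Nonempty) (hT : T.Nonempty)
    (hSb : BddAbove S) (hTb : BddAbove T) (c : ℝ)
    (h1 : ∀ v ∈ S, ∃ w ∈ T, |v - w| ≤ c) (h2 : ∀ w ∈ T, ∃ v ∈ S, |w - v| ≤ c) :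
    |sSup S - sSup T| ≤ c := by
  rw [abs_sub_le_iff]
  constructor
  · rw [sub_le_iff_le_add]
    apply csSup_le hS
    intro v hv
    obtain ⟨w, hw, habs⟩ := h1 v hv
    have := le_csSup hTb hw
    have := abs_le.1 habs
    linarith [this.2]
  · rw [sub_le_iff_le_add]
    apply csSup_le hT
    intro w hw
    obtain ⟨v, hv, habs⟩ := h2 w hw
    have := le_csSup hSb hv
    have := abs_le.1 habs
    linarith [this.2]

lemma sInf_abs_le {S T : Set ℝ} (hS : S.Nonempty) (hT : T.Nonempty)
    (hSb : BddBelow S) (hTb : BddBelow T) (c : ℝ)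
    (h1 : ∀ v ∈ S, ∃ w ∈ T, |v - w| ≤ c) (h2 : ∀ w ∈ T, ∃ v ∈ S, |w - v| ≤ c) :
    |sInf S - sInf T| ≤ c := by
  rw [abs_sub_le_iff]
  constructor
  · have key : sInf S - c ≤ sInf T := by
      apply le_csInf hT
      intro w hw
      obtain ⟨v, hv, habs⟩ := h2 w hw
      have hle := csInf_le hSb hv
      have := abs_le.1 habs
      linarith [this.2]
    linarith
  · have key : sInf T - c ≤ sInf S := by
      apply le_csInf hS
      intro v hv
      obtain ⟨w, hw, habs⟩ := h1 v hv
      have hle := csInf_le hTb hw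
      have := abs_le.1 habs
      linarith [this.2]
    linarith

noncomputable def cLow (k : ℕ) (r : ℝ) (x y : Fin k) : ℝ :=
  if ((x : ℕ) : ℝ) - ((y : ℕ) : ℝ) < r then 1 else 0

noncomputable def cUp (k : ℕ) (r : ℝ) (x y : Fin k) : ℝ :=
  if ((x : ℕ) : ℝ) - ((y : ℕ) : ℝ) ≤ r then 1 else 0

lemma cLow_bounds (k : ℕ) (r : ℝ) : ∀ x y, 0 ≤ cLow k r x y ∧ cLow k r x y ≤ 1 := by
  intro x y; unfold cLow; split <;> norm_num

lemma cUp_bounds (k : ℕ) (r : ℝ) : ∀ x y, 0 ≤ cUp k r x y ∧ cUp k r x y ≤ 1 := by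
  intro x y; unfold cUp; split <;> norm_num

lemma qLow_eq (k : ℕ) (r : ℝ) (η : Fin k → Fin k → ℝ) :
    qLow k r η = ∑ x, ∑ y, cLow k r x y * η x y := by
  unfold qLow cLow
  apply Finset.sum_congr rfl; intro x _
  apply Finset.sum_congr rfl; intro y _
  split <;> simp

lemma qUp_eq (k : ℕ) (r : ℝ) (η : Fin k → Fin k → ℝ) :
    qUp k r η = ∑ x, ∑ y, cUp k r x y * η x y := by
  unfold qUp cUp
  apply Finset.sum_congr rfl; intro x _
  apply Finset.sum_congr rfl; intro y _
  split <;> simp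

lemma q_bounds (k : ℕ) (η : Fin k → Fin k → ℝ) (hη : IsJoint k η)
    (c : Fin k → Fin k → ℝ) (hc : ∀ x y, 0 ≤ c x y ∧ c x y ≤ 1) :
    0 ≤ (∑ x, ∑ y, c x y * η x y) ∧ (∑ x, ∑ y, c x y * η x y) ≤ 1 := by
  constructor
  · apply Finset.sum_nonneg; intro x _
    apply Finset.sum_nonneg; intro y _
    exact mul_nonneg (hc x y).1 (hη.1 x y)
  · rw [← hη.2]
    apply Finset.sum_le_sum; intro x _
    apply Finset.sum_le_sum; intro y _
    calc c x y * η x y ≤ 1 * η x y := mul_le_mul_of_nonneg_right (hc x y).2 (hη.1 x y)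
      _ = η x y := one_mul _

lemma feas_nonempty (k : ℕ) (pa pb : Fin k → ℝ) (h1 : IsDist k pa) (h3 : IsDist k pb) :
    ∃ η, IsJoint k η ∧ margA k η = pa ∧ margB k η = pb := by
  refine ⟨fun x y => pa x * pb y, ⟨fun x y => mul_nonneg (h1.1 x) (h3.1 y), ?_⟩, ?_, ?_⟩
  · have e : ∀ x : Fin k, ∑ y, pa x * pb y = pa x := by
      intro x; rw [← Finset.mul_sum, h3.2, mul_one]
    rw [Finset.sum_congr rfl (fun x _ => e x), h1.2]
  · funext x; show ∑ y, pa x * pb y = pa x; rw [← Finset.mul_sum, h3.2, mul_one]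
  · funext y; show ∑ x, pa x * pb y = pb y; rw [← Finset.sum_mul, h1.2, one_mul]

theorem stmt15 (k : ℕ) (ηa ρa ηb ρb : Fin k → ℝ)
    (h1 : IsDist k ηa) (h2 : IsDist k ρa) (h3 : IsDist k ηb) (h4 : IsDist k ρb)
    (δ : ℝ) (hda : dTV k ηa ρa ≤ δ) (hdb : dTV k ηb ρb ≤ δ) (r : ℤ) :
    |nuL k (r : ℝ) ηa ηb - nuL k (r : ℝ) ρa ρb| ≤ 2 * δ ∧
    |nuU k (r : ℝ) ηa ηb - nuU k (r : ℝ) ρa ρb| ≤ 2 * δ := by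
  have hda' : dTV k ρa ηa ≤ δ := by rw [dTV_symm]; exact hda
  have hdb' : dTV k ρb ηb ≤ δ := by rw [dTV_symm]; exact hdb
  set SL : Set ℝ := {v | ∃ η, IsJoint k η ∧ margA k η = ηa ∧ margB k η = ηb ∧ v = qLow k (r:ℝ) η} with hSL
  set TL : Set ℝ := {v | ∃ η, IsJoint k η ∧ margA k η = ρa ∧ margB k η = ρb ∧ v = qLow k (r:ℝ) η} with hTL
  set SU : Set ℝ := {v | ∃ η, IsJoint k η ∧ margA k η = ηa ∧ margB k η = ηb ∧ v = qUp k (r:ℝ) η} with hSU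
  set TU : Set ℝ := {v | ∃ η, IsJoint k η ∧ margA k η = ρa ∧ margB k η = ρb ∧ v = qUp k (r:ℝ) η} with hTU
  obtain ⟨η₀, hη₀⟩ := feas_nonempty k ηa ηb h1 h3
  obtain ⟨ρ₀, hρ₀⟩ := feas_nonempty k ρa ρb h2 h4
  have hSLne : SL.Nonempty := ⟨qLow k (r:ℝ) η₀, η₀, hη₀.1, hη₀.2.1, hη₀.2.2, rfl⟩
  have hTLne : TL.Nonempty := ⟨qLow k (r:ℝ) ρ₀, ρ₀, hρ₀.1, hρ₀.2.1, hρ₀.2.2, rfl⟩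
  have hSUne : SU.Nonempty := ⟨qUp k (r:ℝ) η₀, η₀, hη₀.1, hη₀.2.1, hη₀.2.2, rfl⟩
  have hTUne : TU.Nonempty := ⟨qUp k (r:ℝ) ρ₀, ρ₀, hρ₀.1, hρ₀.2.1, hρ₀.2.2, rfl⟩
  have hSLb : BddAbove SL := by
    refine ⟨1, ?_⟩; rintro v ⟨η, hη, -, -, rfl⟩
    rw [qLow_eq]; exact (q_bounds k η hη _ (cLow_bounds k (r:ℝ))).2
  have hTLb : BddAbove TL := by
    refine ⟨1, ?_⟩; rintro v ⟨η, hη, -, -, rfl⟩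
    rw [qLow_eq]; exact (q_bounds k η hη _ (cLow_bounds k (r:ℝ))).2
  have hSUb : BddBelow SU := by
    refine ⟨0, ?_⟩; rintro v ⟨η, hη, -, -, rfl⟩
    rw [qUp_eq]; exact (q_bounds k η hη _ (cUp_bounds k (r:ℝ))).1
  have hTUb : BddBelow TU := by
    refine ⟨0, ?_⟩; rintro v ⟨η, hη, -, -, rfl⟩
    rw [qUp_eq]; exact (q_bounds k η hη _ (cUp_bounds k (r:ℝ))).1
  have keyST : ∀ v ∈ SL, ∃ w ∈ TL, |v - w| ≤ 2 * δ := by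
    rintro v ⟨η, hη, hA, hB, rfl⟩
    obtain ⟨ρ, hρj, hρA, hρB, hρc⟩ := two_step k ηa ηb ρa ρb δ h2 h4 hda hdb η hη hA hB
    refine ⟨qLow k (r:ℝ) ρ, ⟨ρ, hρj, hρA, hρB, rfl⟩, ?_⟩
    rw [qLow_eq, qLow_eq]
    exact hρc _ (cLow_bounds k (r:ℝ))
  have keyTS : ∀ w ∈ TL, ∃ v ∈ SL, |w - v| ≤ 2 * δ := by
    rintro w ⟨ρ, hρ, hA, hB, rfl⟩
    obtain ⟨η, hηj, hηA, hηB, hηc⟩ := two_step k ρa ρb ηa ηb δ h1 h3 hda' hdb' ρ hρ hA hB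
    refine ⟨qLow k (r:ℝ) η, ⟨η, hηj, hηA, hηB, rfl⟩, ?_⟩
    rw [qLow_eq, qLow_eq]
    exact hηc _ (cLow_bounds k (r:ℝ))
  have keySTU : ∀ v ∈ SU, ∃ w ∈ TU, |v - w| ≤ 2 * δ := by
    rintro v ⟨η, hη, hA, hB, rfl⟩
    obtain ⟨ρ, hρj, hρA, hρB, hρc⟩ := two_step k ηa ηb ρa ρb δ h2 h4 hda hdb η hη hA hB
    refine ⟨qUp k (r:ℝ) ρ, ⟨ρ, hρj, hρA, hρB, rfl⟩, ?_⟩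
    rw [qUp_eq, qUp_eq]
    exact hρc _ (cUp_bounds k (r:ℝ))
  have keyTSU : ∀ w ∈ TU, ∃ v ∈ SU, |w - v| ≤ 2 * δ := by
    rintro w ⟨ρ, hρ, hA, hB, rfl⟩
    obtain ⟨η, hηj, hηA, hηB, hηc⟩ := two_step k ρa ρb ηa ηb δ h1 h3 hda' hdb' ρ hρ hA hB
    refine ⟨qUp k (r:ℝ) η, ⟨η, hηj, hηA, hηB, rfl⟩, ?_⟩
    rw [qUp_eq, qUp_eq]
    exact hηc _ (cUp_bounds k (r:ℝ))
  constructor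
  · exact sSup_abs_le hSLne hTLne hSLb hTLb (2 * δ) keyST keyTS
  · exact sInf_abs_le hSUne hTUne hSUb hTUb (2 * δ) keySTU keyTSU
end
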